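/- arXiv:1012.1768 — 3 statements merged into one kernel-verified Lean document; each statement's English description precedes it below -/
import Mathlib

section
/- The real vector space Sigma = {tau in S_2 : div tau in V} has dimension exactly 78. -/
open MvPolynomial

noncomputable section

/-- Polynomials in the three variables `x₁, x₂, x₃` with real coefficients. -/
abbrev Poly3 := MvPolynomial (Fin 3) ℝ

/-- 3×3 matrix fields with polynomial entries. -/
abbrev Mat3 := Matrix (Fin 3) (Fin 3) Poly3

/-- The space `P_{k₁,k₂,k₃}` of polynomials of degree at most `k i` in `x_i` for each `i`. -/
def Pdeg (k : Fin 3 → ℕ) : Submodule ℝ Poly3 where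
  carrier := {p | ∀ i, p.degreeOf i ≤ k i}
  zero_mem' := fun i => by simp
  add_mem' := fun {a b} ha hb i =>
    (MvPolynomial.degreeOf_add_le i a b).trans (max_le (ha i) (hb i))
  smul_mem' := fun c p hp i => by
    rw [MvPolynomial.smul_eq_C_mul]
    exact (MvPolynomial.degreeOf_C_mul_le p i c).trans (hp i)

/-- Row-wise divergence of a matrix field: `(div τ)_p = ∑_q ∂τ_{pq}/∂x_q`. -/
def divRow (τ : Mat3) : Fin 3 → Poly3 := fun p => ∑ q, MvPolynomial.pderiv q (τ p q)

lemma divRow_add (a b : Mat3) (p : Fin 3) :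
    divRow (a + b) p = divRow a p + divRow b p := by
  simp [divRow, Matrix.add_apply, Finset.sum_add_distrib]

lemma divRow_smul (c : ℝ) (a : Mat3) (p : Fin 3) :
    divRow (c • a) p = c • divRow a p := by
  simp [divRow, Matrix.smul_apply, Finset.smul_sum]

/-- Membership in the space `S₂`: symmetric matrix fields with
`τ₁₁ ∈ P₃₁₁`, `τ₂₂ ∈ P₁₃₁`, `τ₃₃ ∈ P₁₁₃`, `τ₁₂ ∈ P₂₂₁`, `τ₁₃ ∈ P₂₁₂`, `τ₂₃ ∈ P₁₂₂`. -/
def isS2 (τ : Mat3) : Prop :=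
  (∀ p q, τ p q = τ q p) ∧
  τ 0 0 ∈ Pdeg ![3,1,1] ∧ τ 1 1 ∈ Pdeg ![1,3,1] ∧ τ 2 2 ∈ Pdeg ![1,1,3] ∧
  τ 0 1 ∈ Pdeg ![2,2,1] ∧ τ 0 2 ∈ Pdeg ![2,1,2] ∧ τ 1 2 ∈ Pdeg ![1,2,2]

/-- `S₂` as a subspace of polynomial matrix fields. -/
def S2sub : Submodule ℝ Mat3 where
  carrier := {τ | isS2 τ}
  zero_mem' :=
    ⟨fun _ _ => rfl, Submodule.zero_mem _, Submodule.zero_mem _, Submodule.zero_mem _,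
      Submodule.zero_mem _, Submodule.zero_mem _, Submodule.zero_mem _⟩
  add_mem' := by
    rintro a b ⟨hs, h1, h2, h3, h4, h5, h6⟩ ⟨hs', h1', h2', h3', h4', h5', h6'⟩
    exact ⟨fun p q => by simp [Matrix.add_apply, hs p q, hs' p q],
      Submodule.add_mem _ h1 h1', Submodule.add_mem _ h2 h2', Submodule.add_mem _ h3 h3',
      Submodule.add_mem _ h4 h4', Submodule.add_mem _ h5 h5', Submodule.add_mem _ h6 h6'⟩
  smul_mem' := by
    rintro c a ⟨hs, h1, h2, h3, h4, h5, h6⟩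
    exact ⟨fun p q => by simp [Matrix.smul_apply, hs p q],
      Submodule.smul_mem _ _ h1, Submodule.smul_mem _ _ h2, Submodule.smul_mem _ _ h3,
      Submodule.smul_mem _ _ h4, Submodule.smul_mem _ _ h5, Submodule.smul_mem _ _ h6⟩

/-- The space `Σ = { τ ∈ S₂ : div τ ∈ V }` where `V = P₀₁₁ × P₁₀₁ × P₁₁₀`. -/
def SigmaSub : Submodule ℝ Mat3 where
  carrier := {τ | isS2 τ ∧ divRow τ 0 ∈ Pdeg ![0,1,1] ∧ divRow τ 1 ∈ Pdeg ![1,0,1] ∧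
    divRow τ 2 ∈ Pdeg ![1,1,0]}
  zero_mem' := by
    refine ⟨S2sub.zero_mem, ?_, ?_, ?_⟩ <;>
      · show divRow 0 _ ∈ _
        simp only [divRow, Matrix.zero_apply, map_zero, Finset.sum_const_zero]
        exact Submodule.zero_mem _
  add_mem' := by
    rintro a b ⟨ha, ha0, ha1, ha2⟩ ⟨hb, hb0, hb1, hb2⟩
    exact ⟨S2sub.add_mem ha hb,
      by rw [divRow_add]; exact Submodule.add_mem _ ha0 hb0,
      by rw [divRow_add]; exact Submodule.add_mem _ ha1 hb1,
      by rw [divRow_add]; exact Submodule.add_mem _ ha2 hb2⟩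
  smul_mem' := by
    rintro c a ⟨ha, ha0, ha1, ha2⟩
    exact ⟨S2sub.smul_mem c ha,
      by rw [divRow_smul]; exact Submodule.smul_mem _ _ ha0,
      by rw [divRow_smul]; exact Submodule.smul_mem _ _ ha1,
      by rw [divRow_smul]; exact Submodule.smul_mem _ _ ha2⟩

/-- Integral of (the evaluation of) a polynomial over the edge `{x_i = a, x_j = b}`
of the unit cube `[0,1]³`, with respect to the remaining variable. -/
def edgeInt (i j : Fin 3) (a b : ℝ) (f : Poly3) : ℝ :=
  ∫ t in (0:ℝ)..1,
    MvPolynomial.eval (fun m => if m = i then a else if m = j then b else t) f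

/-- Integral of (the evaluation of) a polynomial over the face `{x_p = a}` of the unit cube. -/
def faceInt (p : Fin 3) (a : ℝ) (f : Poly3) : ℝ :=
  ∫ s in (0:ℝ)..1, ∫ t in (0:ℝ)..1,
    MvPolynomial.eval (if p = 0 then ![a, s, t] else if p = 1 then ![s, a, t] else ![s, t, a]) f

/-- Integral of (the evaluation of) a polynomial over the unit cube `[0,1]³`. -/
def cubeInt (f : Poly3) : ℝ :=
  ∫ x in (0:ℝ)..1, ∫ y in (0:ℝ)..1, ∫ z in (0:ℝ)..1, MvPolynomial.eval ![x, y, z] f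

/-- `(1,1)` entry of the 2×2 matrix `E_m` in the variables `x_i, x_j` (`m : Fin 4` for `E_{m+1}`). -/
def Ed1 (m : Fin 4) (i j : Fin 3) : Poly3 :=
  if m = 0 then -(C (1/2 : ℝ) * X i ^ 2)
  else if m = 1 then -(C (1/3 : ℝ) * X i ^ 3)
  else if m = 2 then -(X i ^ 2 * X j)
  else -(C (2/3 : ℝ) * X i ^ 3 * X j)

/-- Off-diagonal entry of the 2×2 matrix `E_m` in the variables `x_i, x_j`. -/
def Eod (m : Fin 4) (i j : Fin 3) : Poly3 :=
  if m = 0 then X i * X j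
  else if m = 1 then X i ^ 2 * X j
  else if m = 2 then X i * X j ^ 2
  else X i ^ 2 * X j ^ 2

/-- `(2,2)` entry of the 2×2 matrix `E_m` in the variables `x_i, x_j`. -/
def Ed2 (m : Fin 4) (i j : Fin 3) : Poly3 :=
  if m = 0 then -(C (1/2 : ℝ) * X j ^ 2)
  else if m = 1 then -(X i * X j ^ 2)
  else if m = 2 then -(C (1/3 : ℝ) * X j ^ 3)
  else -(C (2/3 : ℝ) * X i * X j ^ 3)

/-- The additional shape function `σ^{ij,(k+1)}` (`k : Fin 8`, so `k+1 ∈ {1,…,8}` as in the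
paper): for `k+1 = 2m-1` it is `E_m`, for `k+1 = 2m` it is `x_l • E_m`, where `E_m` is placed
in the entries `(i,i), (i,j), (j,i), (j,j)` with zeros in all other entries. -/
def shape (i j l : Fin 3) (k : Fin 8) : Mat3 :=
  fun p q =>
    (if k.val % 2 = 0 then 1 else X l) *
      (if p = i ∧ q = i then Ed1 ⟨k.val / 2, by have := k.isLt; omega⟩ i j
      else if (p = i ∧ q = j) ∨ (p = j ∧ q = i) then Eod ⟨k.val / 2, by have := k.isLt; omega⟩ i j
      else if p = j ∧ q = j then Ed2 ⟨k.val / 2, by have := k.isLt; omega⟩ i j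
      else 0)

/-- The space `span{1, x_i, x_j, x_i², x_j², x_l, x_i x_l, x_j x_l, x_i² x_l, x_j² x_l}`. -/
def ncfSpan (i j l : Fin 3) : Submodule ℝ Poly3 :=
  Submodule.span ℝ
    {1, X i, X j, X i ^ 2, X j ^ 2, X l, X i * X l, X j * X l, X i ^ 2 * X l, X j ^ 2 * X l}

/-- The stress space `Σ_ncf` of the lowest order nonconforming element: symmetric matrix
fields with `σ_ii ∈ P₁₁₁` and `σ_ij = σ_ji` in the 10-dimensional span above. -/
def SigmaNcf : Submodule ℝ Mat3 where
  carrier := {σ | (∀ p q, σ p q = σ q p) ∧ (∀ i, σ i i ∈ Pdeg ![1,1,1]) ∧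
    ∀ i j l : Fin 3, i < j → l ≠ i → l ≠ j → σ i j ∈ ncfSpan i j l}
  zero_mem' :=
    ⟨fun _ _ => rfl, fun _ => Submodule.zero_mem _, fun _ _ _ _ _ _ => Submodule.zero_mem _⟩
  add_mem' := by
    rintro a b ⟨hs, hd, ho⟩ ⟨hs', hd', ho'⟩
    exact ⟨fun p q => by simp [Matrix.add_apply, hs p q, hs' p q],
      fun i => Submodule.add_mem _ (hd i) (hd' i),
      fun i j l h1 h2 h3 => Submodule.add_mem _ (ho i j l h1 h2 h3) (ho' i j l h1 h2 h3)⟩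
  smul_mem' := by
    rintro c a ⟨hs, hd, ho⟩
    exact ⟨fun p q => by simp [Matrix.smul_apply, hs p q],
      fun i => Submodule.smul_mem _ _ (hd i),
      fun i j l h1 h2 h3 => Submodule.smul_mem _ _ (ho i j l h1 h2 h3)⟩

/-- The rigid body motion `x ↦ a + b × x` as a polynomial vector field. -/
def rigid (a b : Fin 3 → ℝ) : Fin 3 → Poly3 :=
  ![C (a 0) + (C (b 1) * X 2 - C (b 2) * X 1),
    C (a 1) + (C (b 2) * X 0 - C (b 0) * X 2),
    C (a 2) + (C (b 0) * X 1 - C (b 1) * X 0)]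

/-- The space `T` of rigid body motions. -/
def RigidSub : Submodule ℝ (Fin 3 → Poly3) where
  carrier := {v | ∃ a b : Fin 3 → ℝ, v = rigid a b}
  zero_mem' := ⟨0, 0, by funext i; fin_cases i <;> simp [rigid]⟩
  add_mem' := by
    rintro u v ⟨a, b, rfl⟩ ⟨a', b', rfl⟩
    refine ⟨a + a', b + b', ?_⟩
    funext i; fin_cases i <;>
      · simp [rigid, Pi.add_apply, map_add]
        ring
  smul_mem' := by
    rintro c v ⟨a, b, rfl⟩
    refine ⟨c • a, c • b, ?_⟩
    funext i; fin_cases i <;>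
      · simp [rigid, Pi.smul_apply, smul_eq_C_mul, map_mul, smul_eq_mul]
        ring

/-- The symmetrized gradient `ε(v)_{ij} = ∂v_i/∂x_j + ∂v_j/∂x_i`. -/
def eps (v : Fin 3 → Poly3) : Fin 3 → Fin 3 → Poly3 :=
  fun i j => MvPolynomial.pderiv j (v i) + MvPolynomial.pderiv i (v j)

/-- The index remaining from `{i, j}` in `{0, 1, 2}`. -/
def other (i j : Fin 3) : Fin 3 := ⟨(3 - i.val - j.val) % 3, by omega⟩

/-- The space `{ τ ∈ S₂ : div τ ∈ T }` where `T` is the space of rigid body motions. -/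
def SigmaT : Submodule ℝ Mat3 where
  carrier := {τ | isS2 τ ∧ divRow τ ∈ RigidSub}
  zero_mem' := by
    refine ⟨S2sub.zero_mem, ?_⟩
    have h : divRow (0 : Mat3) = 0 := by
      funext p
      simp only [divRow, Matrix.zero_apply, map_zero, Finset.sum_const_zero]
      rfl
    rw [h]; exact RigidSub.zero_mem
  add_mem' := by
    rintro a b ⟨ha, ha'⟩ ⟨hb, hb'⟩
    refine ⟨S2sub.add_mem ha hb, ?_⟩
    have h : divRow (a + b) = divRow a + divRow b := funext fun p => divRow_add a b p
    rw [h]; exact RigidSub.add_mem ha' hb'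
  smul_mem' := by
    rintro c a ⟨ha, ha'⟩
    refine ⟨S2sub.smul_mem c ha, ?_⟩
    have h : divRow (c • a) = c • divRow a := funext fun p => divRow_smul c a p
    rw [h]; exact RigidSub.smul_mem c ha'


/-! ### Auxiliary development for the dimension count -/

lemma coeff_pderiv' (i : Fin 3) (p : Poly3) (m : Fin 3 →₀ ℕ) :
    coeff m (pderiv i p) = ((m i : ℝ) + 1) * coeff (m + Finsupp.single i 1) p := by
  induction p using MvPolynomial.induction_on' with
  | add p q hp hq => simp [map_add, coeff_add, hp, hq, mul_add]
  | monomial n a =>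
    rw [pderiv_monomial, coeff_monomial, coeff_monomial]
    by_cases h : n = m + Finsupp.single i 1
    · subst h
      have h1 : m + Finsupp.single i 1 - Finsupp.single i 1 = m := add_tsub_cancel_right _ _
      have h2 : ((m + Finsupp.single i 1 : Fin 3 →₀ ℕ)) i = m i + 1 := by
        rw [Finsupp.add_apply, Finsupp.single_apply, if_pos rfl]
      rw [if_pos h1, if_pos rfl, h2]
      push_cast; ring
    · rw [if_neg h]
      by_cases h0 : n i = 0
      · split
        · simp [h0]
        · ring
      · have hne : ¬ (n - Finsupp.single i 1 = m) := by
          intro hc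
          apply h
          ext j
          rw [← hc, Finsupp.add_apply, Finsupp.tsub_apply, Finsupp.single_apply]
          by_cases hij : i = j
          · subst hij; simp; omega
          · simp [hij]
        rw [if_neg hne]; ring

/-- The exponent vector `(a, b, c)` as a finsupp. -/
def mdeg (a b c : ℕ) : Fin 3 →₀ ℕ := Finsupp.equivFunOnFinite.symm ![a, b, c]

@[simp] lemma mdeg_apply (a b c : ℕ) (i : Fin 3) : mdeg a b c i = ![a, b, c] i := rfl

lemma mem_Pdeg_iff {k : Fin 3 → ℕ} {p : Poly3} : p ∈ Pdeg k ↔ ∀ i, p.degreeOf i ≤ k i :=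
  Iff.rfl

lemma coeff_eq_zero_of_mem_Pdeg {k : Fin 3 → ℕ} {p : Poly3} (hp : p ∈ Pdeg k)
    {m : Fin 3 →₀ ℕ} (i : Fin 3) (h : k i < m i) : coeff m p = 0 := by
  by_contra h0
  have := (MvPolynomial.monomial_le_degreeOf i (MvPolynomial.mem_support_iff.2 h0)).trans
    (mem_Pdeg_iff.1 hp i)
  omega

lemma mem_Pdeg_of_coeff {k : Fin 3 → ℕ} {p : Poly3}
    (h : ∀ m : Fin 3 →₀ ℕ, ∀ i : Fin 3, k i < m i → coeff m p = 0) : p ∈ Pdeg k := by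
  refine mem_Pdeg_iff.2 fun i => MvPolynomial.degreeOf_le_iff.2 fun m hm => ?_
  by_contra hc
  exact (MvPolynomial.mem_support_iff.1 hm) (h m i (by omega))

/-- Index type for the monomial box of `Pdeg k`. -/
abbrev BoxIdx (k : Fin 3 → ℕ) := Fin (k 0 + 1) × Fin (k 1 + 1) × Fin (k 2 + 1)

/-- The exponent vector of a box index. -/
def boxm {k : Fin 3 → ℕ} (t : BoxIdx k) : Fin 3 →₀ ℕ := mdeg t.1 t.2.1 t.2.2

lemma boxm_apply {k : Fin 3 → ℕ} (t : BoxIdx k) (i : Fin 3) :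
    boxm t i = ![(t.1 : ℕ), t.2.1, t.2.2] i := rfl

lemma boxm_le {k : Fin 3 → ℕ} (t : BoxIdx k) (i : Fin 3) : boxm t i ≤ k i := by
  fin_cases i <;> simp [boxm_apply] <;> omega

lemma boxm_inj {k : Fin 3 → ℕ} {s t : BoxIdx k} (h : boxm s = boxm t) : s = t := by
  have h0 := congrFun (congrArg DFunLike.coe h) 0
  have h1 := congrFun (congrArg DFunLike.coe h) 1
  have h2 := congrFun (congrArg DFunLike.coe h) 2
  simp [boxm_apply] at h0 h1 h2
  exact Prod.ext (Fin.ext h0) (Prod.ext (Fin.ext h1) (Fin.ext h2))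

/-- Reading off the coefficients on the box. -/
def toCoord (k : Fin 3 → ℕ) : Pdeg k →ₗ[ℝ] (BoxIdx k → ℝ) where
  toFun p := fun t => coeff (boxm t) p.1
  map_add' p q := by funext t; simp [coeff_add]
  map_smul' c p := by funext t; simp [coeff_smul]

/-- Building a polynomial from coefficients on the box. -/
def ofCoordRaw (k : Fin 3 → ℕ) : (BoxIdx k → ℝ) →ₗ[ℝ] Poly3 where
  toFun g := ∑ t : BoxIdx k, monomial (boxm t) (g t)
  map_add' g h := by simp [Finset.sum_add_distrib]
  map_smul' c g := by simp [Finset.smul_sum, MvPolynomial.smul_monomial]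

lemma ofCoordRaw_mem (k : Fin 3 → ℕ) (g : BoxIdx k → ℝ) : ofCoordRaw k g ∈ Pdeg k := by
  refine mem_Pdeg_of_coeff fun m i hi => ?_
  simp only [ofCoordRaw, LinearMap.coe_mk, AddHom.coe_mk, coeff_sum, coeff_monomial]
  refine Finset.sum_eq_zero fun t _ => ?_
  rw [if_neg]
  intro hc
  rw [← hc] at hi
  exact absurd (boxm_le t i) (by omega)

def ofCoord (k : Fin 3 → ℕ) : (BoxIdx k → ℝ) →ₗ[ℝ] Pdeg k :=
  (ofCoordRaw k).codRestrict (Pdeg k) (ofCoordRaw_mem k)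

lemma toCoord_ofCoord (k : Fin 3 → ℕ) (g : BoxIdx k → ℝ) :
    toCoord k (ofCoord k g) = g := by
  funext t
  show coeff (boxm t) (∑ s : BoxIdx k, monomial (boxm s) (g s)) = g t
  rw [coeff_sum]
  rw [Finset.sum_eq_single t]
  · simp [coeff_monomial]
  · intro s _ hs
    rw [coeff_monomial, if_neg fun hc => hs (boxm_inj hc)]
  · intro h; exact absurd (Finset.mem_univ t) h

lemma ofCoord_toCoord (k : Fin 3 → ℕ) (p : Pdeg k) :
    ofCoord k (toCoord k p) = p := by
  apply Subtype.ext
  show (∑ s : BoxIdx k, monomial (boxm s) (coeff (boxm s) p.1)) = p.1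
  apply MvPolynomial.ext
  intro m
  rw [coeff_sum]
  by_cases hm : ∀ i, m i ≤ k i
  · set t : BoxIdx k := (⟨m 0, by have := hm 0; omega⟩, ⟨m 1, by have := hm 1; omega⟩,
      ⟨m 2, by have := hm 2; omega⟩) with ht
    have hbt : boxm t = m := by
      ext i; fin_cases i <;> simp [boxm_apply, ht]
    rw [Finset.sum_eq_single t]
    · rw [coeff_monomial, if_pos hbt, hbt]
    · intro s _ hs
      rw [coeff_monomial, if_neg]
      intro hc
      exact hs (boxm_inj (hc.trans hbt.symm))
    · intro h; exact absurd (Finset.mem_univ t) h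
  · push_neg at hm
    obtain ⟨i, hi⟩ := hm
    rw [coeff_eq_zero_of_mem_Pdeg p.2 i (by omega)]
    refine Finset.sum_eq_zero fun s _ => ?_
    rw [coeff_monomial, if_neg]
    intro hc
    rw [← hc] at hi
    exact absurd (boxm_le s i) (by omega)

/-- `Pdeg k` is linearly equivalent to functions on the box. -/
def PdegEquiv (k : Fin 3 → ℕ) : Pdeg k ≃ₗ[ℝ] (BoxIdx k → ℝ) :=
  LinearEquiv.ofLinear (toCoord k) (ofCoord k)
    (LinearMap.ext fun g => toCoord_ofCoord k g)
    (LinearMap.ext fun p => ofCoord_toCoord k p)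

instance PdegFinite (k : Fin 3 → ℕ) : FiniteDimensional ℝ (Pdeg k) :=
  Module.Finite.equiv (PdegEquiv k).symm

lemma finrank_Pdeg (k : Fin 3 → ℕ) :
    Module.finrank ℝ (Pdeg k) = (k 0 + 1) * ((k 1 + 1) * (k 2 + 1)) := by
  rw [(PdegEquiv k).finrank_eq, Module.finrank_fintype_fun_eq_card]
  simp

/-- Product of the six entry spaces of `S₂`. -/
abbrev SixProd := Pdeg ![3,1,1] × Pdeg ![1,3,1] × Pdeg ![1,1,3] ×
  Pdeg ![2,2,1] × Pdeg ![2,1,2] × Pdeg ![1,2,2]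

/-- The symmetric matrix with the given six entries. -/
def symMat (a b c d e f : Poly3) : Mat3 := Matrix.of ![![a,d,e],![d,b,f],![e,f,c]]

lemma symMat_mem (x : SixProd) :
    symMat x.1.1 x.2.1.1 x.2.2.1.1 x.2.2.2.1.1 x.2.2.2.2.1.1 x.2.2.2.2.2.1 ∈ S2sub := by
  obtain ⟨⟨a, ha⟩, ⟨b, hb⟩, ⟨c, hc⟩, ⟨d, hd⟩, ⟨e, he⟩, ⟨f, hf⟩⟩ := x
  refine ⟨fun p q => ?_, ha, hb, hc, hd, he, hf⟩
  fin_cases p <;> fin_cases q <;> rfl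

/-- From six entries to a symmetric matrix field. -/
def sixToMat : SixProd →ₗ[ℝ] Mat3 where
  toFun x := symMat x.1.1 x.2.1.1 x.2.2.1.1 x.2.2.2.1.1 x.2.2.2.2.1.1 x.2.2.2.2.2.1
  map_add' x y := by
    ext p q
    fin_cases p <;> fin_cases q <;> simp [symMat, Matrix.add_apply]
  map_smul' c x := by
    ext p q
    fin_cases p <;> fin_cases q <;> simp [symMat, Matrix.smul_apply]

def sixToS2 : SixProd →ₗ[ℝ] S2sub := sixToMat.codRestrict S2sub symMat_mem

/-- From a matrix field in `S₂` to its six entries. -/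
def s2ToSix : S2sub →ₗ[ℝ] SixProd where
  toFun τ := ⟨⟨τ.1 0 0, τ.2.2.1⟩, ⟨τ.1 1 1, τ.2.2.2.1⟩, ⟨τ.1 2 2, τ.2.2.2.2.1⟩,
    ⟨τ.1 0 1, τ.2.2.2.2.2.1⟩, ⟨τ.1 0 2, τ.2.2.2.2.2.2.1⟩, ⟨τ.1 1 2, τ.2.2.2.2.2.2.2⟩⟩
  map_add' τ σ := rfl
  map_smul' c τ := rfl

def S2Equiv : S2sub ≃ₗ[ℝ] SixProd := by
  refine LinearEquiv.ofLinear s2ToSix sixToS2 (LinearMap.ext fun x => ?_) (LinearMap.ext fun τ => ?_)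
  · obtain ⟨⟨a, ha⟩, ⟨b, hb⟩, ⟨c, hc⟩, ⟨d, hd⟩, ⟨e, he⟩, ⟨f, hf⟩⟩ := x
    rfl
  · apply Subtype.ext
    refine Matrix.ext fun p q => ?_
    have hs := τ.2.1
    fin_cases p <;> fin_cases q <;>
      first
        | rfl
        | exact hs 0 1
        | exact hs 0 2
        | exact hs 1 2

instance : FiniteDimensional ℝ S2sub := Module.Finite.equiv S2Equiv.symm

set_option maxHeartbeats 1000000 in
set_option synthInstance.maxHeartbeats 400000 in
lemma finrank_S2 : Module.finrank ℝ S2sub = 102 := by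
  rw [S2Equiv.finrank_eq]
  rw [Module.finrank_prod, Module.finrank_prod, Module.finrank_prod, Module.finrank_prod,
    Module.finrank_prod]
  rw [finrank_Pdeg, finrank_Pdeg, finrank_Pdeg, finrank_Pdeg, finrank_Pdeg, finrank_Pdeg]
  norm_num
  rfl

lemma coeff_divRow (τ : Mat3) (p : Fin 3) (m : Fin 3 →₀ ℕ) :
    coeff m (divRow τ p) =
      ∑ q : Fin 3, ((m q : ℝ) + 1) * coeff (m + Finsupp.single q 1) (τ p q) := by
  simp only [divRow, coeff_sum, coeff_pderiv']

/-- Degree box bounds for each entry of a matrix in `S₂`. -/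
def Kb (p q : Fin 3) : Fin 3 → ℕ := fun i =>
  if i = p ∨ i = q then (if p = q then 3 else 2) else 1

lemma Kb00 : Kb 0 0 = ![3,1,1] := by funext i; fin_cases i <;> simp [Kb]
lemma Kb11 : Kb 1 1 = ![1,3,1] := by funext i; fin_cases i <;> simp [Kb]
lemma Kb22 : Kb 2 2 = ![1,1,3] := by funext i; fin_cases i <;> simp [Kb]
lemma Kb01 : Kb 0 1 = ![2,2,1] := by funext i; fin_cases i <;> simp [Kb]
lemma Kb02 : Kb 0 2 = ![2,1,2] := by funext i; fin_cases i <;> simp [Kb]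
lemma Kb12 : Kb 1 2 = ![1,2,2] := by funext i; fin_cases i <;> simp [Kb]
lemma Kb10 : Kb 1 0 = ![2,2,1] := by funext i; fin_cases i <;> simp [Kb]
lemma Kb20 : Kb 2 0 = ![2,1,2] := by funext i; fin_cases i <;> simp [Kb]
lemma Kb21 : Kb 2 1 = ![1,2,2] := by funext i; fin_cases i <;> simp [Kb]

lemma entry_mem_Kb {τ : Mat3} (h : isS2 τ) (p q : Fin 3) : τ p q ∈ Pdeg (Kb p q) := by
  obtain ⟨hs, h1, h2, h3, h4, h5, h6⟩ := h
  have g10 : τ 1 0 ∈ Pdeg (Kb 1 0) := by rw [hs 1 0, Kb10]; exact h4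
  have g20 : τ 2 0 ∈ Pdeg (Kb 2 0) := by rw [hs 2 0, Kb20]; exact h5
  have g21 : τ 2 1 ∈ Pdeg (Kb 2 1) := by rw [hs 2 1, Kb21]; exact h6
  have g00 : τ 0 0 ∈ Pdeg (Kb 0 0) := by rw [Kb00]; exact h1
  have g11 : τ 1 1 ∈ Pdeg (Kb 1 1) := by rw [Kb11]; exact h2
  have g22 : τ 2 2 ∈ Pdeg (Kb 2 2) := by rw [Kb22]; exact h3
  have g01 : τ 0 1 ∈ Pdeg (Kb 0 1) := by rw [Kb01]; exact h4
  have g02 : τ 0 2 ∈ Pdeg (Kb 0 2) := by rw [Kb02]; exact h5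
  have g12 : τ 1 2 ∈ Pdeg (Kb 1 2) := by rw [Kb12]; exact h6
  fin_cases p <;> fin_cases q <;> assumption

/-- The offending exponent vectors for row `p`. -/
def offm (p : Fin 3) (a b c : ℕ) : Fin 3 →₀ ℕ :=
  if p = 0 then mdeg (a+1) b c else if p = 1 then mdeg b (a+1) c else mdeg b c (a+1)

/-- Degree bounds of the row spaces of `V`. -/
def Vdeg (p : Fin 3) : Fin 3 → ℕ := fun i => if i = p then 0 else 1

lemma Vdeg0 : Vdeg 0 = ![0,1,1] := by funext i; fin_cases i <;> simp [Vdeg]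
lemma Vdeg1 : Vdeg 1 = ![1,0,1] := by funext i; fin_cases i <;> simp [Vdeg]
lemma Vdeg2 : Vdeg 2 = ![1,1,0] := by funext i; fin_cases i <;> simp [Vdeg]

/-- If the 8 offending coefficients of row `p` vanish, the row lies in the `V` box. -/
lemma divRow_mem_of_vanish {τ : Mat3} (hK : ∀ p q, τ p q ∈ Pdeg (Kb p q)) (p : Fin 3)
    (hD : ∀ a b c : ℕ, a ≤ 1 → b ≤ 1 → c ≤ 1 → coeff (offm p a b c) (divRow τ p) = 0) :
    divRow τ p ∈ Pdeg (Vdeg p) := by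
  refine mem_Pdeg_of_coeff fun m i hi => ?_
  by_cases hbig : ∃ j, j ≠ p ∧ 2 ≤ m j
  · obtain ⟨j, hjp, hj⟩ := hbig
    rw [coeff_divRow]
    refine Finset.sum_eq_zero fun q _ => ?_
    rw [coeff_eq_zero_of_mem_Pdeg (hK p q) j ?_, mul_zero]
    have hval : ((m + Finsupp.single q 1 : Fin 3 →₀ ℕ)) j
        = m j + (if q = j then 1 else 0) := by
      rw [Finsupp.add_apply, Finsupp.single_apply]
    by_cases hqj : q = j
    · have hpj : ¬ p = j := fun hc => hjp hc.symm
      have hK2 : Kb p q j = 2 := by subst hqj; simp [Kb, hpj]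
      rw [hK2, hval, if_pos hqj]; omega
    · have hjq : j ≠ q := fun hc => hqj hc.symm
      have hK1 : Kb p q j = 1 := by simp [Kb, hjp, hjq]
      rw [hK1, hval, if_neg hqj]; omega
  · simp only [not_exists, not_and, not_le] at hbig
    have hip : i = p := by
      by_contra hc
      have h1 : Vdeg p i = 1 := by simp [Vdeg, hc]
      have h2 := hbig i hc
      omega
    subst hip
    have hVi : Vdeg i i = 0 := by simp [Vdeg]
    rw [hVi] at hi
    by_cases h3 : 3 ≤ m i
    · rw [coeff_divRow]
      refine Finset.sum_eq_zero fun q _ => ?_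
      rw [coeff_eq_zero_of_mem_Pdeg (hK i q) i ?_, mul_zero]
      have hval : ((m + Finsupp.single q 1 : Fin 3 →₀ ℕ)) i
          = m i + (if q = i then 1 else 0) := by
        rw [Finsupp.add_apply, Finsupp.single_apply]
      by_cases hqi : q = i
      · have hK3 : Kb i q i = 3 := by subst hqi; simp [Kb]
        rw [hK3, hval, if_pos hqi]; omega
      · have hiq : ¬ i = q := fun hc => hqi hc.symm
        have hK2 : Kb i q i = 2 := by simp [Kb, hiq]
        rw [hK2, hval, if_neg hqi]; omega
    · fin_cases i
      · have hD0 : ∀ a b c : ℕ, a ≤ 1 → b ≤ 1 → c ≤ 1 →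
            coeff (offm 0 a b c) (divRow τ 0) = 0 := hD
        have hi0 : 0 < m 0 := hi
        have h30 : ¬ 3 ≤ m 0 := h3
        have hb1 : m 1 ≤ 1 := by have := hbig 1 (by decide); omega
        have hb2 : m 2 ≤ 1 := by have := hbig 2 (by decide); omega
        have hm : offm 0 (m 0 - 1) (m 1) (m 2) = m := by
          ext j
          fin_cases j <;> simp [offm, mdeg] <;> omega
        have := hD0 (m 0 - 1) (m 1) (m 2) (by omega) hb1 hb2
        rw [hm] at this
        exact this
      · have hD0 : ∀ a b c : ℕ, a ≤ 1 → b ≤ 1 → c ≤ 1 →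
            coeff (offm 1 a b c) (divRow τ 1) = 0 := hD
        have hi0 : 0 < m 1 := hi
        have h30 : ¬ 3 ≤ m 1 := h3
        have hb1 : m 0 ≤ 1 := by have := hbig 0 (by decide); omega
        have hb2 : m 2 ≤ 1 := by have := hbig 2 (by decide); omega
        have hm : offm 1 (m 1 - 1) (m 0) (m 2) = m := by
          ext j
          fin_cases j <;> simp [offm, mdeg] <;> omega
        have := hD0 (m 1 - 1) (m 0) (m 2) (by omega) hb1 hb2
        rw [hm] at this
        exact this
      · have hD0 : ∀ a b c : ℕ, a ≤ 1 → b ≤ 1 → c ≤ 1 →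
            coeff (offm 2 a b c) (divRow τ 2) = 0 := hD
        have hi0 : 0 < m 2 := hi
        have h30 : ¬ 3 ≤ m 2 := h3
        have hb1 : m 0 ≤ 1 := by have := hbig 0 (by decide); omega
        have hb2 : m 1 ≤ 1 := by have := hbig 1 (by decide); omega
        have hm : offm 2 (m 2 - 1) (m 0) (m 1) = m := by
          ext j
          fin_cases j <;> simp [offm, mdeg] <;> omega
        have := hD0 (m 2 - 1) (m 0) (m 1) (by omega) hb1 hb2
        rw [hm] at this
        exact this

/-- Offending coefficients vanish when the row lies in the `V` box. -/
lemma vanish_of_divRow_mem {f : Poly3} (p : Fin 3) (hf : f ∈ Pdeg (Vdeg p))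
    (a b c : ℕ) : coeff (offm p a b c) f = 0 := by
  refine coeff_eq_zero_of_mem_Pdeg hf p ?_
  have h0 : Vdeg p p = 0 := by simp [Vdeg]
  rw [h0]
  fin_cases p <;> simp [offm, mdeg]

/-- Index type for the 24 constraint coefficients. -/
abbrev DIdx := Fin 3 × Fin 2 × Fin 2 × Fin 2

/-- The constraint map: reads off the 24 offending coefficients of the divergence. -/
def Dmap : S2sub →ₗ[ℝ] (DIdx → ℝ) where
  toFun σ := fun t => coeff (offm t.1 t.2.1 t.2.2.1 t.2.2.2) (divRow σ.1 t.1)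
  map_add' σ σ' := by
    funext t
    show coeff _ (divRow (σ.1 + σ'.1) t.1) = _
    rw [divRow_add, coeff_add]
    rfl
  map_smul' c σ := by
    funext t
    show coeff _ (divRow (c • σ.1) t.1) = _
    rw [divRow_smul, coeff_smul]
    rfl

lemma mem_SigmaSub_iff {τ : Mat3} : τ ∈ SigmaSub ↔ isS2 τ ∧ divRow τ 0 ∈ Pdeg ![0,1,1] ∧
    divRow τ 1 ∈ Pdeg ![1,0,1] ∧ divRow τ 2 ∈ Pdeg ![1,1,0] := Iff.rfl

lemma sigma_eq_map : SigmaSub = (LinearMap.ker Dmap).map S2sub.subtype := by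
  ext τ
  simp only [Submodule.mem_map, LinearMap.mem_ker, mem_SigmaSub_iff]
  constructor
  · rintro ⟨hS2, h0, h1, h2⟩
    refine ⟨⟨τ, hS2⟩, ?_, rfl⟩
    funext t
    obtain ⟨p, a, b, c⟩ := t
    show coeff (offm p a b c) (divRow τ p) = 0
    fin_cases p
    · exact vanish_of_divRow_mem 0 (by rw [Vdeg0]; exact h0) a b c
    · exact vanish_of_divRow_mem 1 (by rw [Vdeg1]; exact h1) a b c
    · exact vanish_of_divRow_mem 2 (by rw [Vdeg2]; exact h2) a b c
  · rintro ⟨⟨τ', hS2⟩, hker, rfl⟩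
    have hK := entry_mem_Kb hS2
    have hDall : ∀ (p : Fin 3) (a b c : ℕ), a ≤ 1 → b ≤ 1 → c ≤ 1 →
        coeff (offm p a b c) (divRow τ' p) = 0 := by
      intro p a b c ha hb hc
      have h := congrFun hker (p, ⟨a, by omega⟩, ⟨b, by omega⟩, ⟨c, by omega⟩)
      exact h
    exact ⟨hS2, by rw [← Vdeg0]; exact divRow_mem_of_vanish hK 0 (hDall 0),
      by rw [← Vdeg1]; exact divRow_mem_of_vanish hK 1 (hDall 1),
      by rw [← Vdeg2]; exact divRow_mem_of_vanish hK 2 (hDall 2)⟩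

/-- Preimage witnesses: a single monomial placed at the `(p,p)` diagonal entry. -/
def Npre (p : Fin 3) (a b c : ℕ) : Mat3 := fun r s =>
  if r = p ∧ s = p then monomial (offm p (a+1) b c) 1 else 0

lemma Npre_apply (p : Fin 3) (a b c : ℕ) (r s : Fin 3) :
    Npre p a b c r s = if r = p ∧ s = p then monomial (offm p (a+1) b c) 1 else 0 := rfl

lemma offm_le_Kb (p : Fin 3) (a b c : ℕ) (ha : a ≤ 1) (hb : b ≤ 1) (hc : c ≤ 1) (i : Fin 3) :
    offm p (a+1) b c i ≤ Kb p p i := by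
  fin_cases p <;> fin_cases i <;> simp [offm, mdeg, Kb] <;> omega

lemma Npre_entry_mem (p : Fin 3) (a b c : ℕ) (ha : a ≤ 1) (hb : b ≤ 1) (hc : c ≤ 1)
    (r s : Fin 3) (k : Fin 3 → ℕ) (hk : Kb p p = k ∨ ¬(r = p ∧ s = p)) :
    Npre p a b c r s ∈ Pdeg k := by
  rw [Npre_apply]
  by_cases h : r = p ∧ s = p
  · rw [if_pos h]
    rcases hk with hk | hk
    · subst hk
      refine mem_Pdeg_of_coeff fun m i hi => ?_
      rw [coeff_monomial, if_neg]
      intro hcm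
      rw [← hcm] at hi
      exact absurd (offm_le_Kb p a b c ha hb hc i) (by omega)
    · exact absurd h hk
  · rw [if_neg h]; exact Submodule.zero_mem _

lemma Npre_mem (p : Fin 3) (a b c : ℕ) (ha : a ≤ 1) (hb : b ≤ 1) (hc : c ≤ 1) :
    Npre p a b c ∈ S2sub := by
  refine ⟨fun r s => by rw [Npre_apply, Npre_apply, if_congr and_comm rfl rfl],
    ?_, ?_, ?_, ?_, ?_, ?_⟩ <;>
    refine Npre_entry_mem p a b c ha hb hc _ _ _ ?_ <;>
    fin_cases p <;>
    first
      | (left; first | exact Kb00 | exact Kb11 | exact Kb22)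
      | (right; decide)

lemma offm_sub_single (p : Fin 3) (a b c : ℕ) :
    offm p (a+1) b c - Finsupp.single p 1 = offm p a b c := by
  ext j
  rw [Finsupp.tsub_apply, Finsupp.single_apply]
  fin_cases p <;> fin_cases j <;> simp [offm, mdeg]

lemma offm_apply_self (p : Fin 3) (a b c : ℕ) : offm p (a+1) b c p = a + 2 := by
  fin_cases p <;> simp [offm, mdeg]

lemma divRow_Npre (p : Fin 3) (a b c : ℕ) (r : Fin 3) :
    divRow (Npre p a b c) r =
      if r = p then monomial (offm p a b c) ((a : ℝ) + 2) else 0 := by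
  unfold divRow
  by_cases hr : r = p
  · subst hr
    rw [if_pos rfl]
    rw [Finset.sum_eq_single r]
    · rw [Npre_apply, if_pos ⟨rfl, rfl⟩, pderiv_monomial, offm_sub_single, offm_apply_self]
      congr 1
      push_cast
      ring
    · intro q _ hq
      rw [Npre_apply, if_neg (fun hcc => hq hcc.2), map_zero]
    · intro h; exact absurd (Finset.mem_univ r) h
  · rw [if_neg hr]
    refine Finset.sum_eq_zero fun q _ => ?_
    rw [Npre_apply, if_neg (fun hcc => hr hcc.1), map_zero]

lemma offm_inj' {p : Fin 3} {a b c a' b' c' : ℕ} (h : offm p a b c = offm p a' b' c') :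
    a = a' ∧ b = b' ∧ c = c' := by
  have h0 := congrFun (congrArg DFunLike.coe h) 0
  have h1 := congrFun (congrArg DFunLike.coe h) 1
  have h2 := congrFun (congrArg DFunLike.coe h) 2
  fin_cases p <;> simp [offm, mdeg] at h0 h1 h2 <;> exact ⟨by omega, by omega, by omega⟩

lemma Dmap_Npre (p : Fin 3) (a b c : Fin 2) :
    Dmap ⟨Npre p a.val b.val c.val,
        Npre_mem p a.val b.val c.val (by omega) (by omega) (by omega)⟩ =
      ((a.val : ℝ) + 2) • (Pi.single (p, a, b, c) 1 : DIdx → ℝ) := by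
  funext t
  obtain ⟨r, a', b', c'⟩ := t
  show coeff (offm r a' b' c') (divRow (Npre p a.val b.val c.val) r) = _
  rw [divRow_Npre, Pi.smul_apply, Pi.single_apply, smul_eq_mul]
  by_cases hr : r = p
  · subst hr
    rw [if_pos rfl, coeff_monomial]
    by_cases he : offm r (a.val : ℕ) b.val c.val = offm r a'.val b'.val c'.val
    · obtain ⟨ea, eb, ec⟩ := offm_inj' he
      have ht : ((r, a', b', c') : DIdx) = (r, a, b, c) := by
        rw [Prod.mk.injEq, Prod.mk.injEq, Prod.mk.injEq]
        exact ⟨rfl, Fin.ext ea.symm, Fin.ext eb.symm, Fin.ext ec.symm⟩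
      rw [if_pos he, if_pos ht]
      ring
    · rw [if_neg he, if_neg, mul_zero]
      intro hcq
      apply he
      rw [Prod.mk.injEq, Prod.mk.injEq, Prod.mk.injEq] at hcq
      obtain ⟨-, ha2, hb2, hc2⟩ := hcq
      rw [ha2, hb2, hc2]
  · rw [if_neg hr, coeff_zero, if_neg, mul_zero]
    intro hcq
    exact hr (congrArg Prod.fst hcq)

lemma Dmap_surj : LinearMap.range Dmap = ⊤ := by
  rw [eq_top_iff]
  intro g _
  have hrepr : g = ∑ t : DIdx, g t • (Pi.single t 1 : DIdx → ℝ) := by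
    funext s
    rw [Finset.sum_apply]
    rw [Finset.sum_eq_single s]
    · simp
    · intro t _ ht
      rw [Pi.smul_apply, Pi.single_apply, if_neg (fun hcc => ht hcc.symm), smul_zero]
    · intro h; exact absurd (Finset.mem_univ s) h
  rw [hrepr]
  refine Submodule.sum_mem _ fun t _ => Submodule.smul_mem _ _ ?_
  obtain ⟨p, a, b, c⟩ := t
  have hD := Dmap_Npre p a b c
  have hs : (Pi.single ((p, a, b, c) : DIdx) 1 : DIdx → ℝ) =
      ((a.val : ℝ) + 2)⁻¹ • (((a.val : ℝ) + 2) • (Pi.single ((p, a, b, c) : DIdx) 1 : DIdx → ℝ)) := by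
    rw [smul_smul, inv_mul_cancel₀ (by positivity), one_smul]
  rw [hs, ← hD]
  exact Submodule.smul_mem _ _ (LinearMap.mem_range_self _ _)

set_option maxHeartbeats 800000 in
lemma finrank_sigma_aux : Module.finrank ℝ SigmaSub = 78 := by
  have h1 : Module.finrank ℝ SigmaSub = Module.finrank ℝ (LinearMap.ker Dmap) := by
    rw [sigma_eq_map]
    exact Submodule.finrank_map_subtype_eq S2sub (LinearMap.ker Dmap)
  have h2 := LinearMap.finrank_range_add_finrank_ker Dmap
  rw [finrank_S2, Dmap_surj, finrank_top] at h2
  have h3 : Module.finrank ℝ (DIdx → ℝ) = 24 := by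
    rw [Module.finrank_fintype_fun_eq_card]
    simp
  rw [h3] at h2
  omega

/-- The space `Σ = {τ ∈ S₂ : div τ ∈ V}` has dimension exactly 78. -/
theorem finrank_Sigma : Module.finrank ℝ SigmaSub = 78 := finrank_sigma_aux

end
end

section
/- Sigma_ncf is contained in Sigma = {tau in S_2 : div tau in V}: every tau in Sigma_ncf belongs to S_2 and its row-wise divergence satisfies (div tau)_1 in P_{0,1,1}, (div tau)_2 in P_{1,0,1}, (div tau)_3 in P_{1,1,0}. -/
open MvPolynomial

noncomputable section

section AuxNcf

lemma Pdeg_mono {k k' : Fin 3 → ℕ} (h : ∀ m, k m ≤ k' m) : Pdeg k ≤ Pdeg k' :=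
  fun _ hf m => (hf m).trans (h m)

lemma degreeOf_monomial_le' (m : Fin 3 →₀ ℕ) (a : ℝ) (i : Fin 3) :
    degreeOf i (monomial m a : Poly3) ≤ m i := by
  by_cases hz : a = 0
  · simp [hz]
  · rw [degreeOf_monomial_eq _ _ hz]

lemma degreeOf_pderiv_le' (i j : Fin 3) (f : Poly3) {d : ℕ}
    (h : degreeOf i f ≤ if i = j then d + 1 else d) :
    degreeOf i (pderiv j f) ≤ d := by
  conv_lhs => rw [f.as_sum, map_sum]
  refine (degreeOf_sum_le _ _ _).trans (Finset.sup_le fun m hm => ?_)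
  rw [pderiv_monomial]
  refine (degreeOf_monomial_le' _ _ _).trans ?_
  have hm' : m i ≤ degreeOf i f := monomial_le_degreeOf i hm
  rw [Finsupp.tsub_apply, Finsupp.single_apply]
  split_ifs at h ⊢ with h1 h2 h3 <;> omega

lemma degMon (m a b : Fin 3) (p q : ℕ) :
    degreeOf m (X a ^ p * X b ^ q : Poly3) ≤
      (if m = a then p else 0) + (if m = b then q else 0) := by
  refine (degreeOf_mul_le _ _ _).trans (add_le_add ?_ ?_) <;>
  · refine (degreeOf_pow_le _ _ _).trans ?_
    rw [degreeOf_X]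
    split_ifs <;> simp

lemma memP {k : Fin 3 → ℕ} {a b : Fin 3} (p q : ℕ) (hab : a ≠ b)
    (hp : p ≤ k a) (hq : q ≤ k b) : (X a ^ p * X b ^ q : Poly3) ∈ Pdeg k := by
  intro m
  refine (degMon m a b p q).trans ?_
  split_ifs with h1 h2 h2
  · exact absurd (h1.symm.trans h2) hab
  · simpa [h1] using hp
  · simpa [h2] using hq
  · simp

lemma pderiv_mem_Pdeg {k k' : Fin 3 → ℕ} {f : Poly3} (p : Fin 3)
    (hf : f ∈ Pdeg k) (h : ∀ m, k m ≤ if m = p then k' m + 1 else k' m) :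
    pderiv p f ∈ Pdeg k' :=
  fun m => degreeOf_pderiv_le' m p f ((hf m).trans (h m))

lemma pderiv_mem_of_deg {j : Fin 3} {k : Fin 3 → ℕ} {g : Poly3}
    (h : ∀ m, degreeOf m g ≤ if m = j then k m + 1 else k m) : pderiv j g ∈ Pdeg k :=
  fun m => degreeOf_pderiv_le' m j g (h m)

lemma pderiv_monXX_mem {k : Fin 3 → ℕ} {a b j : Fin 3} (p q : ℕ) (hab : a ≠ b)
    (hpa : p ≤ if a = j then k a + 1 else k a) (hqb : q ≤ if b = j then k b + 1 else k b) :
    pderiv j (X a ^ p * X b ^ q : Poly3) ∈ Pdeg k := by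
  apply pderiv_mem_of_deg
  intro m
  refine (degMon m a b p q).trans ?_
  rcases eq_or_ne m a with rfl | h1 <;> rcases eq_or_ne m b with rfl | h2
  · exact absurd rfl hab
  · simpa [h2] using hpa
  · simpa [h1] using hqb
  · simp [h1, h2]

lemma ncfSpan_comm (i j l : Fin 3) : ncfSpan i j l = ncfSpan j i l := by
  unfold ncfSpan
  rw [Set.insert_comm (X i : Poly3) (X j), Set.insert_comm (X i ^ 2 : Poly3) (X j ^ 2),
    Set.insert_comm (X i * X l : Poly3) (X j * X l),
    Set.pair_comm (X i ^ 2 * X l : Poly3) (X j ^ 2 * X l)]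

lemma ncfSpan_le_Pdeg {i j l : Fin 3} (hij : i ≠ j) (hil : i ≠ l) (hjl : j ≠ l)
    {k : Fin 3 → ℕ} (hki : 2 ≤ k i) (hkj : 2 ≤ k j) (hkl : 1 ≤ k l) :
    ncfSpan i j l ≤ Pdeg k := by
  rw [ncfSpan, Submodule.span_le]
  rintro g hg
  simp only [Set.mem_insert_iff, Set.mem_singleton_iff] at hg
  rcases hg with rfl | rfl | rfl | rfl | rfl | rfl | rfl | rfl | rfl | rfl
  · simpa using memP (k := k) (a := i) (b := j) 0 0 hij (by omega) (by omega)
  · simpa using memP (k := k) (b := j) 1 0 hij (by omega) (by omega)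
  · simpa using memP (k := k) (a := i) 0 1 hij (by omega) (by omega)
  · simpa using memP (k := k) (b := j) 2 0 hij (by omega) (by omega)
  · simpa using memP (k := k) (a := i) 0 2 hij (by omega) (by omega)
  · simpa using memP (k := k) (a := i) (b := l) 0 1 hil (by omega) hkl
  · simpa using memP (k := k) (a := i) (b := l) 1 1 hil (by omega) hkl
  · simpa using memP (k := k) (a := j) (b := l) 1 1 hjl (by omega) hkl
  · simpa using memP (k := k) (a := i) (b := l) 2 1 hil hki hkl
  · simpa using memP (k := k) (a := j) (b := l) 2 1 hjl hkj hkl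

set_option maxHeartbeats 1000000 in
lemma ncfSpan_pderiv_mem {i j l : Fin 3} (hij : i ≠ j) (hil : i ≠ l) (hjl : j ≠ l)
    {k : Fin 3 → ℕ} (hkj : 1 ≤ k j) (hkl : 1 ≤ k l) {g : Poly3} (hg : g ∈ ncfSpan i j l) :
    pderiv j g ∈ Pdeg k := by
  rw [ncfSpan] at hg
  induction hg using Submodule.span_induction with
  | zero => rw [map_zero]; exact Submodule.zero_mem _
  | add x y hx hy ihx ihy => rw [map_add]; exact Submodule.add_mem _ ihx ihy
  | smul c x hx ihx => rw [Derivation.map_smul]; exact Submodule.smul_mem _ _ ihx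
  | mem x hx =>
    simp only [Set.mem_insert_iff, Set.mem_singleton_iff] at hx
    rcases hx with rfl | rfl | rfl | rfl | rfl | rfl | rfl | rfl | rfl | rfl
    · rw [show pderiv j (1 : Poly3) = 0 from pderiv_one]
      exact Submodule.zero_mem _
    · rw [pderiv_X_of_ne hij]
      exact Submodule.zero_mem _
    · rw [show (X j : Poly3) = X j ^ 1 * X l ^ 0 by rw [pow_one, pow_zero, mul_one]]
      exact pderiv_monXX_mem (k := k) 1 0 hjl
        (by rw [if_pos rfl]; exact Nat.le_add_left 1 (k j)) (Nat.zero_le _)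
    · have hz : pderiv j (X i ^ 2 : Poly3) = 0 := by
        rw [pderiv_pow, pderiv_X_of_ne hij, mul_zero]
      rw [hz]; exact Submodule.zero_mem _
    · rw [show (X j ^ 2 : Poly3) = X j ^ 2 * X l ^ 0 by rw [pow_zero, mul_one]]
      exact pderiv_monXX_mem (k := k) 2 0 hjl
        (by rw [if_pos rfl]; exact Nat.succ_le_succ hkj) (Nat.zero_le _)
    · rw [pderiv_X_of_ne (Ne.symm hjl)]
      exact Submodule.zero_mem _
    · have hz : pderiv j (X i * X l : Poly3) = 0 := by
        rw [pderiv_mul, pderiv_X_of_ne hij, pderiv_X_of_ne (Ne.symm hjl), zero_mul, mul_zero,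
          add_zero]
      rw [hz]; exact Submodule.zero_mem _
    · rw [show (X j * X l : Poly3) = X j ^ 1 * X l ^ 1 by rw [pow_one, pow_one]]
      exact pderiv_monXX_mem (k := k) 1 1 hjl
        (by rw [if_pos rfl]; exact Nat.le_add_left 1 (k j))
        (by rw [if_neg (Ne.symm hjl)]; exact hkl)
    · have hz : pderiv j (X i ^ 2 * X l : Poly3) = 0 := by
        rw [pderiv_mul, pderiv_pow, pderiv_X_of_ne hij, pderiv_X_of_ne (Ne.symm hjl), mul_zero,
          zero_mul, mul_zero, add_zero]
      rw [hz]; exact Submodule.zero_mem _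
    · rw [show (X j ^ 2 * X l : Poly3) = X j ^ 2 * X l ^ 1 by rw [pow_one]]
      exact pderiv_monXX_mem (k := k) 2 1 hjl
        (by rw [if_pos rfl]; exact Nat.succ_le_succ hkj)
        (by rw [if_neg (Ne.symm hjl)]; exact hkl)

end AuxNcf

/-- `Σ_ncf ⊆ Σ`: every `τ ∈ Σ_ncf` belongs to `S₂` and its row-wise divergence satisfies
`(div τ)₁ ∈ P₀₁₁`, `(div τ)₂ ∈ P₁₀₁`, `(div τ)₃ ∈ P₁₁₀`. -/
theorem SigmaNcf_le_Sigma :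
    ∀ τ ∈ SigmaNcf, isS2 τ ∧ divRow τ 0 ∈ Pdeg ![0,1,1] ∧
      divRow τ 1 ∈ Pdeg ![1,0,1] ∧ divRow τ 2 ∈ Pdeg ![1,1,0] := by
  rintro τ ⟨hs, hd, ho⟩
  have h01 : τ 0 1 ∈ ncfSpan 0 1 2 := ho 0 1 2 (by decide) (by decide) (by decide)
  have h02 : τ 0 2 ∈ ncfSpan 0 2 1 := ho 0 2 1 (by decide) (by decide) (by decide)
  have h12 : τ 1 2 ∈ ncfSpan 1 2 0 := ho 1 2 0 (by decide) (by decide) (by decide)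
  have h01' : τ 0 1 ∈ ncfSpan 1 0 2 := (ncfSpan_comm 0 1 2) ▸ h01
  have h02' : τ 0 2 ∈ ncfSpan 2 0 1 := (ncfSpan_comm 0 2 1) ▸ h02
  have h12' : τ 1 2 ∈ ncfSpan 2 1 0 := (ncfSpan_comm 1 2 0) ▸ h12
  refine ⟨⟨hs, ?_, ?_, ?_, ?_, ?_, ?_⟩, ?_, ?_, ?_⟩
  · exact Pdeg_mono (by decide) (hd 0)
  · exact Pdeg_mono (by decide) (hd 1)
  · exact Pdeg_mono (by decide) (hd 2)
  · exact ncfSpan_le_Pdeg (by decide) (by decide) (by decide)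
      (by norm_num) (by norm_num) (by decide) h01
  · exact ncfSpan_le_Pdeg (by decide) (by decide) (by decide)
      (by norm_num) (by decide) (by norm_num) h02
  · exact ncfSpan_le_Pdeg (by decide) (by decide) (by decide)
      (by norm_num) (by decide) (by norm_num) h12
  · show (∑ q, pderiv q (τ 0 q)) ∈ _
    rw [Fin.sum_univ_three]
    refine Submodule.add_mem _ (Submodule.add_mem _ ?_ ?_) ?_
    · exact pderiv_mem_Pdeg 0 (hd 0) (by decide)
    · exact ncfSpan_pderiv_mem (i := 0) (l := 2) (by decide) (by decide) (by decide)
        (by norm_num) (by decide) h01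
    · exact ncfSpan_pderiv_mem (i := 0) (l := 1) (by decide) (by decide) (by decide)
        (by decide) (by decide) h02
  · show (∑ q, pderiv q (τ 1 q)) ∈ _
    rw [Fin.sum_univ_three, hs 1 0]
    refine Submodule.add_mem _ (Submodule.add_mem _ ?_ ?_) ?_
    · exact ncfSpan_pderiv_mem (i := 1) (l := 2) (by decide) (by decide) (by decide)
        (by norm_num) (by decide) h01'
    · exact pderiv_mem_Pdeg 1 (hd 1) (by decide)
    · exact ncfSpan_pderiv_mem (i := 1) (l := 0) (by decide) (by decide) (by decide)
        (by decide) (by decide) h12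
  · show (∑ q, pderiv q (τ 2 q)) ∈ _
    rw [Fin.sum_univ_three, hs 2 0, hs 2 1]
    refine Submodule.add_mem _ (Submodule.add_mem _ ?_ ?_) ?_
    · exact ncfSpan_pderiv_mem (i := 2) (l := 1) (by decide) (by decide) (by decide)
        (by norm_num) (by norm_num) h02'
    · exact ncfSpan_pderiv_mem (i := 2) (l := 0) (by decide) (by decide) (by decide)
        (by norm_num) (by norm_num) h12'
    · exact pderiv_mem_Pdeg 2 (hd 2) (by decide)


end
end

section
/- Face determination of the normal trace: let sigma be in S_2, let p in {1,2,3}, a in {0,1}, and let f = {x in [0,1]^3 : x_p = a} be the corresponding face of the unit cube. Assume: (i) for each of the four edges of f (given by additionally fixing x_q = b with q != p, b in {0,1}, and with l the index distinct from p and q) and each v in span{1, x_l}, the integral over that edge of sigma_pq * v with respect to x_l vanishes; (ii) for each v in P_{1,1} in the two variables other than x_p, the integral over f of sigma_pp * v vanishes; (iii) for each q != p, with l the index distinct from p and q, and each v in span{1, x_l}, the integral over f of sigma_pq * v vanishes. Then the normal trace vanishes identically on f: sigma_p1 = sigma_p2 = sigma_p3 = 0 at every point of f. -/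
open MvPolynomial

noncomputable section

private lemma coverFin3 (p q l : Fin 3) (hqp : q ≠ p) (hlp : l ≠ p) (hlq : l ≠ q) (i : Fin 3) :
    i = p ∨ i = q ∨ i = l := by
  revert hqp hlp hlq; revert i; revert p q l; decide

open Finset in
lemma eval_box (p q l : Fin 3) (hqp : q ≠ p) (hlp : l ≠ p) (hlq : l ≠ q)
    (kp kq kl : ℕ) (f : Poly3)
    (hp : f.degreeOf p ≤ kp) (hq : f.degreeOf q ≤ kq) (hl : f.degreeOf l ≤ kl)
    (x : Fin 3 → ℝ) :
    eval x f = ∑ m ∈ range (kq+1), ∑ n ∈ range (kl+1),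
      (∑ j ∈ range (kp+1),
        x p ^ j * coeff (Finsupp.single p j + Finsupp.single q m + Finsupp.single l n) f)
        * x q ^ m * x l ^ n := by
  classical
  set e : ℕ × ℕ × ℕ → (Fin 3 →₀ ℕ) :=
    fun t => Finsupp.single p t.1 + Finsupp.single q t.2.1 + Finsupp.single l t.2.2 with he
  have heval : ∀ t : ℕ × ℕ × ℕ, (e t) p = t.1 ∧ (e t) q = t.2.1 ∧ (e t) l = t.2.2 := by
    intro t
    simp [he, Finsupp.single_apply, hqp, hlp, hlq, hqp.symm, hlp.symm, hlq.symm]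
  have hprod : ∀ d : Fin 3 →₀ ℕ, (∏ i, x i ^ d i) = x p ^ d p * x q ^ d q * x l ^ d l := by
    intro d
    have huniv : (Finset.univ : Finset (Fin 3)) = {p, q, l} := by
      ext i
      rcases coverFin3 p q l hqp hlp hlq i with h | h | h <;> simp [h]
    rw [huniv, Finset.prod_insert (by simp [hqp.symm, hlp.symm]),
      Finset.prod_insert (by simp [hlq.symm]), Finset.prod_singleton, mul_assoc]
  have hsupp : f.support ⊆ ((range (kp+1)) ×ˢ (range (kq+1)) ×ˢ (range (kl+1))).image e := by
    intro d hd
    have hdp : d p ≤ kp := le_trans (MvPolynomial.monomial_le_degreeOf p hd) hp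
    have hdq : d q ≤ kq := le_trans (MvPolynomial.monomial_le_degreeOf q hd) hq
    have hdl : d l ≤ kl := le_trans (MvPolynomial.monomial_le_degreeOf l hd) hl
    refine Finset.mem_image.2 ⟨(d p, d q, d l), by simp [Finset.mem_product]; omega, ?_⟩
    obtain ⟨h1, h2, h3⟩ := heval (d p, d q, d l)
    ext i
    rcases coverFin3 p q l hqp hlp hlq i with h | h | h <;> subst h <;> simp_all
  have hinj : ∀ s ∈ (range (kp+1)) ×ˢ (range (kq+1)) ×ˢ (range (kl+1)),
      ∀ t ∈ (range (kp+1)) ×ˢ (range (kq+1)) ×ˢ (range (kl+1)), e s = e t → s = t := by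
    intro s _ t _ hst
    obtain ⟨h1, h2, h3⟩ := heval s
    obtain ⟨h1', h2', h3'⟩ := heval t
    rw [hst] at h1 h2 h3
    exact Prod.ext (h1.symm.trans h1') (Prod.ext (h2.symm.trans h2') (h3.symm.trans h3'))
  have step : eval x f = ∑ t ∈ (range (kp+1)) ×ˢ (range (kq+1)) ×ˢ (range (kl+1)),
      coeff (e t) f * (x p ^ t.1 * x q ^ t.2.1 * x l ^ t.2.2) := by
    rw [MvPolynomial.eval_eq', Finset.sum_subset hsupp
      (fun d _ hds => by rw [MvPolynomial.notMem_support_iff.1 hds]; ring),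
      Finset.sum_image hinj]
    refine Finset.sum_congr rfl fun t _ => ?_
    obtain ⟨h1, h2, h3⟩ := heval t
    rw [hprod, h1, h2, h3]
  rw [step]
  simp only [Finset.sum_product]
  rw [Finset.sum_comm]
  refine Finset.sum_congr rfl fun m _ => ?_
  rw [Finset.sum_comm]
  refine Finset.sum_congr rfl fun n _ => ?_
  rw [Finset.sum_mul, Finset.sum_mul]
  refine Finset.sum_congr rfl fun j _ => ?_
  ring

lemma intp01 (A B C D : ℝ) :
    ∫ t in (0:ℝ)..1, (A + B*t + C*t^2 + D*t^3) = A + B/2 + C/3 + D/4 := by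
  have key : ∀ t ∈ Set.uIcc (0:ℝ) 1,
      HasDerivAt (fun x : ℝ => A*x + (B*(x^2/2) + (C*(x^3/3) + D*(x^4/4))))
        (A + B*t + C*t^2 + D*t^3) t := by
    intro t _
    have h := ((hasDerivAt_id t).const_mul A).add
      ((((hasDerivAt_pow 2 t).div_const 2).const_mul B).add
      ((((hasDerivAt_pow 3 t).div_const 3).const_mul C).add
      (((hasDerivAt_pow 4 t).div_const 4).const_mul D)))
    refine h.congr_deriv ?_
    push_cast; ring
  rw [intervalIntegral.integral_eq_sub_of_hasDerivAt key
    (Continuous.intervalIntegrable (by continuity) _ _)]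
  norm_num; ring

open Finset in
lemma offdiagKey (f : Poly3) (p q l : Fin 3) (hqp : q ≠ p) (hlp : l ≠ p) (hlq : l ≠ q)
    (a : ℝ) (sw : Bool)
    (hp : f.degreeOf p ≤ 2) (hq : f.degreeOf q ≤ 2) (hl : f.degreeOf l ≤ 1)
    (hE : ∀ b ∈ ({0,1} : Set ℝ), ∀ v ∈ Submodule.span ℝ ({1, X l} : Set Poly3),
      (∫ t in (0:ℝ)..1, eval (fun m => if m = p then a else if m = q then b else t) (f * v)) = 0)
    (hF : ∀ v ∈ Submodule.span ℝ ({1, X l} : Set Poly3),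
      (∫ s in (0:ℝ)..1, ∫ t in (0:ℝ)..1,
        eval (fun m => if m = p then a else if m = q then (if sw then t else s)
          else (if sw then s else t)) (f * v)) = 0)
    (x : Fin 3 → ℝ) (hx : x p = a) :
    eval x f = 0 := by
  classical
  set c : ℕ → ℕ → ℝ := fun m n => ∑ j ∈ range (2+1),
    a ^ j * coeff (Finsupp.single p j + Finsupp.single q m + Finsupp.single l n) f with hc
  have key : ∀ y : Fin 3 → ℝ, y p = a → eval y f =
      c 0 0 + c 1 0 * y q + c 2 0 * (y q)^2
      + (c 0 1 + c 1 1 * y q + c 2 1 * (y q)^2) * y l := by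
    intro y hy
    rw [eval_box p q l hqp hlp hlq 2 2 1 f hp hq hl y, hy]
    simp only [hc, Finset.sum_range_succ, Finset.sum_range_zero]
    ring
  clear_value c
  have keyZ : ∀ b t : ℝ,
      eval (fun m => if m = p then a else if m = q then b else t) f =
      c 0 0 + c 1 0 * b + c 2 0 * b^2 + (c 0 1 + c 1 1 * b + c 2 1 * b^2) * t := by
    intro b t
    rw [key _ (by simp)]
    simp [hqp, hlp, hlq]
  have evalZl : ∀ b t : ℝ,
      eval (fun m => if m = p then a else if m = q then b else t) (X l) = t := by
    intro b t; simp [hlp, hlq]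
  have hone : (1 : Poly3) ∈ Submodule.span ℝ ({1, X l} : Set Poly3) :=
    Submodule.subset_span (by simp)
  have hXl : (X l : Poly3) ∈ Submodule.span ℝ ({1, X l} : Set Poly3) :=
    Submodule.subset_span (by simp)
  -- edge equations
  have E01 : c 0 0 + c 0 1 / 2 = 0 := by
    have e := hE 0 (by simp) 1 hone
    rw [show (∫ t in (0:ℝ)..1,
        eval (fun m => if m = p then a else if m = q then (0:ℝ) else t) (f * 1)) =
      ∫ t in (0:ℝ)..1, (c 0 0 + c 0 1 * t + 0*t^2 + 0*t^3) from
      intervalIntegral.integral_congr fun t _ => by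
        rw [map_mul, map_one, mul_one, keyZ]; ring, intp01] at e
    linarith
  have E02 : c 0 0 / 2 + c 0 1 / 3 = 0 := by
    have e := hE 0 (by simp) (X l) hXl
    rw [show (∫ t in (0:ℝ)..1,
        eval (fun m => if m = p then a else if m = q then (0:ℝ) else t) (f * X l)) =
      ∫ t in (0:ℝ)..1, ((0:ℝ) + c 0 0 * t + c 0 1 * t^2 + 0*t^3) from
      intervalIntegral.integral_congr fun t _ => by
        rw [map_mul, keyZ, evalZl]; ring, intp01] at e
    linarith
  have E11 : (c 0 0 + c 1 0 + c 2 0) + (c 0 1 + c 1 1 + c 2 1) / 2 = 0 := by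
    have e := hE 1 (by simp) 1 hone
    rw [show (∫ t in (0:ℝ)..1,
        eval (fun m => if m = p then a else if m = q then (1:ℝ) else t) (f * 1)) =
      ∫ t in (0:ℝ)..1, ((c 0 0 + c 1 0 + c 2 0) + (c 0 1 + c 1 1 + c 2 1) * t + 0*t^2 + 0*t^3) from
      intervalIntegral.integral_congr fun t _ => by
        rw [map_mul, map_one, mul_one, keyZ]; ring, intp01] at e
    linarith
  have E12 : (c 0 0 + c 1 0 + c 2 0) / 2 + (c 0 1 + c 1 1 + c 2 1) / 3 = 0 := by
    have e := hE 1 (by simp) (X l) hXl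
    rw [show (∫ t in (0:ℝ)..1,
        eval (fun m => if m = p then a else if m = q then (1:ℝ) else t) (f * X l)) =
      ∫ t in (0:ℝ)..1, ((0:ℝ) + (c 0 0 + c 1 0 + c 2 0) * t + (c 0 1 + c 1 1 + c 2 1) * t^2 + 0*t^3) from
      intervalIntegral.integral_congr fun t _ => by
        rw [map_mul, keyZ, evalZl]; ring, intp01] at e
    linarith
  -- face equations
  obtain ⟨F1, F2⟩ :
      (c 0 0 + c 1 0 / 2 + c 2 0 / 3 + c 0 1 / 2 + c 1 1 / 4 + c 2 1 / 6 = 0) ∧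
      (c 0 0 / 2 + c 1 0 / 4 + c 2 0 / 6 + c 0 1 / 3 + c 1 1 / 6 + c 2 1 / 9 = 0) := by
    cases sw
    · -- sw = false : point q ↦ s, l ↦ t
      have hF' : ∀ v ∈ Submodule.span ℝ ({1, X l} : Set Poly3),
          (∫ s in (0:ℝ)..1, ∫ t in (0:ℝ)..1,
            eval (fun m => if m = p then a else if m = q then s else t) (f * v)) = 0 := by
        intro v hv
        have := hF v hv
        simpa using this
      constructor
      · have e := hF' 1 hone
        have hinner : ∀ s : ℝ, (∫ t in (0:ℝ)..1,
            eval (fun m => if m = p then a else if m = q then s else t) (f * 1)) =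
            (c 0 0 + c 0 1/2) + (c 1 0 + c 1 1/2) * s + (c 2 0 + c 2 1/2) * s^2 + 0*s^3 := by
          intro s
          rw [show (∫ t in (0:ℝ)..1,
              eval (fun m => if m = p then a else if m = q then s else t) (f * 1)) =
            ∫ t in (0:ℝ)..1, ((c 0 0 + c 1 0 * s + c 2 0 * s^2)
              + (c 0 1 + c 1 1 * s + c 2 1 * s^2) * t + 0*t^2 + 0*t^3) from
            intervalIntegral.integral_congr fun t _ => by
              rw [map_mul, map_one, mul_one, keyZ]; ring, intp01]
          ring
        simp only [hinner] at e
        rw [intp01] at e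
        linarith
      · have e := hF' (X l) hXl
        have hinner : ∀ s : ℝ, (∫ t in (0:ℝ)..1,
            eval (fun m => if m = p then a else if m = q then s else t) (f * X l)) =
            (c 0 0/2 + c 0 1/3) + (c 1 0/2 + c 1 1/3) * s + (c 2 0/2 + c 2 1/3) * s^2 + 0*s^3 := by
          intro s
          rw [show (∫ t in (0:ℝ)..1,
              eval (fun m => if m = p then a else if m = q then s else t) (f * X l)) =
            ∫ t in (0:ℝ)..1, ((0:ℝ) + (c 0 0 + c 1 0 * s + c 2 0 * s^2) * t
              + (c 0 1 + c 1 1 * s + c 2 1 * s^2) * t^2 + 0*t^3) from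
            intervalIntegral.integral_congr fun t _ => by
              rw [map_mul, keyZ, evalZl]; ring, intp01]
          ring
        simp only [hinner] at e
        rw [intp01] at e
        linarith
    · -- sw = true : point q ↦ t, l ↦ s
      have hF' : ∀ v ∈ Submodule.span ℝ ({1, X l} : Set Poly3),
          (∫ s in (0:ℝ)..1, ∫ t in (0:ℝ)..1,
            eval (fun m => if m = p then a else if m = q then t else s) (f * v)) = 0 := by
        intro v hv
        have := hF v hv
        simpa using this
      constructor
      · have e := hF' 1 hone
        have hinner : ∀ s : ℝ, (∫ t in (0:ℝ)..1,
            eval (fun m => if m = p then a else if m = q then t else s) (f * 1)) =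
            (c 0 0 + c 1 0/2 + c 2 0/3) + (c 0 1 + c 1 1/2 + c 2 1/3) * s + 0*s^2 + 0*s^3 := by
          intro s
          rw [show (∫ t in (0:ℝ)..1,
              eval (fun m => if m = p then a else if m = q then t else s) (f * 1)) =
            ∫ t in (0:ℝ)..1, ((c 0 0 + c 0 1 * s) + (c 1 0 + c 1 1 * s) * t
              + (c 2 0 + c 2 1 * s) * t^2 + 0*t^3) from
            intervalIntegral.integral_congr fun t _ => by
              rw [map_mul, map_one, mul_one, keyZ]; ring, intp01]
          ring
        simp only [hinner] at e
        rw [intp01] at e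
        linarith
      · have e := hF' (X l) hXl
        have hinner : ∀ s : ℝ, (∫ t in (0:ℝ)..1,
            eval (fun m => if m = p then a else if m = q then t else s) (f * X l)) =
            (0:ℝ) + (c 0 0 + c 1 0/2 + c 2 0/3) * s + (c 0 1 + c 1 1/2 + c 2 1/3) * s^2 + 0*s^3 := by
          intro s
          rw [show (∫ t in (0:ℝ)..1,
              eval (fun m => if m = p then a else if m = q then t else s) (f * X l)) =
            ∫ t in (0:ℝ)..1, ((c 0 0 * s + c 0 1 * s^2) + (c 1 0 * s + c 1 1 * s^2) * t
              + (c 2 0 * s + c 2 1 * s^2) * t^2 + 0*t^3) from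
            intervalIntegral.integral_congr fun t _ => by
              rw [map_mul, keyZ, evalZl]; ring, intp01]
          ring
        simp only [hinner] at e
        rw [intp01] at e
        linarith
  have z00 : c 0 0 = 0 := by linarith
  have z01 : c 0 1 = 0 := by linarith
  have z10 : c 1 0 = 0 := by linarith
  have z11 : c 1 1 = 0 := by linarith
  have z20 : c 2 0 = 0 := by linarith
  have z21 : c 2 1 = 0 := by linarith
  rw [key x hx, z00, z01, z10, z11, z20, z21]
  ring

open Finset in
lemma diagKey (f : Poly3) (p q l : Fin 3) (hqp : q ≠ p) (hlp : l ≠ p) (hlq : l ≠ q)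
    (a : ℝ) (sw : Bool)
    (hp : f.degreeOf p ≤ 3) (hq : f.degreeOf q ≤ 1) (hl : f.degreeOf l ≤ 1)
    (hF : ∀ v ∈ Submodule.span ℝ ({1, X q, X l, X q * X l} : Set Poly3),
      (∫ s in (0:ℝ)..1, ∫ t in (0:ℝ)..1,
        eval (fun m => if m = p then a else if m = q then (if sw then t else s)
          else (if sw then s else t)) (f * v)) = 0)
    (x : Fin 3 → ℝ) (hx : x p = a) :
    eval x f = 0 := by
  classical
  set c : ℕ → ℕ → ℝ := fun m n => ∑ j ∈ range (3+1),
    a ^ j * coeff (Finsupp.single p j + Finsupp.single q m + Finsupp.single l n) f with hc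
  have key : ∀ y : Fin 3 → ℝ, y p = a → eval y f =
      c 0 0 + c 1 0 * y q + (c 0 1 + c 1 1 * y q) * y l := by
    intro y hy
    rw [eval_box p q l hqp hlp hlq 3 1 1 f hp hq hl y, hy]
    simp only [hc, Finset.sum_range_succ, Finset.sum_range_zero]
    ring
  clear_value c
  have keyZ : ∀ b t : ℝ,
      eval (fun m => if m = p then a else if m = q then b else t) f =
      c 0 0 + c 1 0 * b + (c 0 1 + c 1 1 * b) * t := by
    intro b t
    rw [key _ (by simp)]
    simp [hqp, hlp, hlq]
  have evalZq : ∀ b t : ℝ,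
      eval (fun m => if m = p then a else if m = q then b else t) (X q) = b := by
    intro b t; simp [hqp]
  have evalZl : ∀ b t : ℝ,
      eval (fun m => if m = p then a else if m = q then b else t) (X l) = t := by
    intro b t; simp [hlp, hlq]
  have hone : (1 : Poly3) ∈ Submodule.span ℝ ({1, X q, X l, X q * X l} : Set Poly3) :=
    Submodule.subset_span (by simp)
  have hXq : (X q : Poly3) ∈ Submodule.span ℝ ({1, X q, X l, X q * X l} : Set Poly3) :=
    Submodule.subset_span (by simp)
  have hXl : (X l : Poly3) ∈ Submodule.span ℝ ({1, X q, X l, X q * X l} : Set Poly3) :=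
    Submodule.subset_span (by simp)
  have hXql : (X q * X l : Poly3) ∈ Submodule.span ℝ ({1, X q, X l, X q * X l} : Set Poly3) :=
    Submodule.subset_span (by simp)
  obtain ⟨G1, G2, G3, G4⟩ :
      (c 0 0 + c 1 0 / 2 + c 0 1 / 2 + c 1 1 / 4 = 0) ∧
      (c 0 0 / 2 + c 1 0 / 3 + c 0 1 / 4 + c 1 1 / 6 = 0) ∧
      (c 0 0 / 2 + c 1 0 / 4 + c 0 1 / 3 + c 1 1 / 6 = 0) ∧
      (c 0 0 / 4 + c 1 0 / 6 + c 0 1 / 6 + c 1 1 / 9 = 0) := by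
    cases sw
    · -- sw = false : q ↦ s, l ↦ t
      have hF' : ∀ v ∈ Submodule.span ℝ ({1, X q, X l, X q * X l} : Set Poly3),
          (∫ s in (0:ℝ)..1, ∫ t in (0:ℝ)..1,
            eval (fun m => if m = p then a else if m = q then s else t) (f * v)) = 0 := by
        intro v hv
        have := hF v hv
        simpa using this
      refine ⟨?_, ?_, ?_, ?_⟩
      · have e := hF' (1) hone
        have hinner : ∀ s : ℝ, (∫ t in (0:ℝ)..1,
            eval (fun m => if m = p then a else if m = q then s else t) (f * (1))) =
            (c 0 0 + c 0 1/2) + (c 1 0 + c 1 1/2) * s + 0*s^2 + 0*s^3 := by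
          intro s
          rw [show (∫ t in (0:ℝ)..1,
              eval (fun m => if m = p then a else if m = q then s else t) (f * (1))) =
            ∫ t in (0:ℝ)..1, (((c 0 0 + c 1 0 * s)) + ((c 0 1 + c 1 1 * s)) * t + ((0:ℝ)) * t^2 + 0*t^3) from
            intervalIntegral.integral_congr fun t _ => by
              rw [map_mul, map_one, mul_one, keyZ]; ring, intp01]
          ring
        simp only [hinner] at e
        rw [intp01] at e
        linarith
      · have e := hF' (X q) hXq
        have hinner : ∀ s : ℝ, (∫ t in (0:ℝ)..1,
            eval (fun m => if m = p then a else if m = q then s else t) (f * (X q))) =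
            (0:ℝ) + (c 0 0 + c 0 1/2) * s + (c 1 0 + c 1 1/2) * s^2 + 0*s^3 := by
          intro s
          rw [show (∫ t in (0:ℝ)..1,
              eval (fun m => if m = p then a else if m = q then s else t) (f * (X q))) =
            ∫ t in (0:ℝ)..1, (((c 0 0 * s + c 1 0 * s^2)) + ((c 0 1 * s + c 1 1 * s^2)) * t + ((0:ℝ)) * t^2 + 0*t^3) from
            intervalIntegral.integral_congr fun t _ => by
              rw [map_mul, keyZ, evalZq]; ring, intp01]
          ring
        simp only [hinner] at e
        rw [intp01] at e
        linarith
      · have e := hF' (X l) hXl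
        have hinner : ∀ s : ℝ, (∫ t in (0:ℝ)..1,
            eval (fun m => if m = p then a else if m = q then s else t) (f * (X l))) =
            (c 0 0/2 + c 0 1/3) + (c 1 0/2 + c 1 1/3) * s + 0*s^2 + 0*s^3 := by
          intro s
          rw [show (∫ t in (0:ℝ)..1,
              eval (fun m => if m = p then a else if m = q then s else t) (f * (X l))) =
            ∫ t in (0:ℝ)..1, (((0:ℝ)) + ((c 0 0 + c 1 0 * s)) * t + ((c 0 1 + c 1 1 * s)) * t^2 + 0*t^3) from
            intervalIntegral.integral_congr fun t _ => by
              rw [map_mul, keyZ, evalZl]; ring, intp01]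
          ring
        simp only [hinner] at e
        rw [intp01] at e
        linarith
      · have e := hF' (X q * X l) hXql
        have hinner : ∀ s : ℝ, (∫ t in (0:ℝ)..1,
            eval (fun m => if m = p then a else if m = q then s else t) (f * (X q * X l))) =
            (0:ℝ) + (c 0 0/2 + c 0 1/3) * s + (c 1 0/2 + c 1 1/3) * s^2 + 0*s^3 := by
          intro s
          rw [show (∫ t in (0:ℝ)..1,
              eval (fun m => if m = p then a else if m = q then s else t) (f * (X q * X l))) =
            ∫ t in (0:ℝ)..1, (((0:ℝ)) + ((c 0 0 * s + c 1 0 * s^2)) * t + ((c 0 1 * s + c 1 1 * s^2)) * t^2 + 0*t^3) from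
            intervalIntegral.integral_congr fun t _ => by
              rw [map_mul, map_mul, keyZ, evalZq, evalZl]; ring, intp01]
          ring
        simp only [hinner] at e
        rw [intp01] at e
        linarith
    · -- sw = true : q ↦ t, l ↦ s
      have hF' : ∀ v ∈ Submodule.span ℝ ({1, X q, X l, X q * X l} : Set Poly3),
          (∫ s in (0:ℝ)..1, ∫ t in (0:ℝ)..1,
            eval (fun m => if m = p then a else if m = q then t else s) (f * v)) = 0 := by
        intro v hv
        have := hF v hv
        simpa using this
      refine ⟨?_, ?_, ?_, ?_⟩
      · have e := hF' (1) hone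
        have hinner : ∀ s : ℝ, (∫ t in (0:ℝ)..1,
            eval (fun m => if m = p then a else if m = q then t else s) (f * (1))) =
            (c 0 0 + c 1 0/2) + (c 0 1 + c 1 1/2) * s + 0*s^2 + 0*s^3 := by
          intro s
          rw [show (∫ t in (0:ℝ)..1,
              eval (fun m => if m = p then a else if m = q then t else s) (f * (1))) =
            ∫ t in (0:ℝ)..1, (((c 0 0 + c 0 1 * s)) + ((c 1 0 + c 1 1 * s)) * t + ((0:ℝ)) * t^2 + 0*t^3) from
            intervalIntegral.integral_congr fun t _ => by
              rw [map_mul, map_one, mul_one, keyZ]; ring, intp01]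
          ring
        simp only [hinner] at e
        rw [intp01] at e
        linarith
      · have e := hF' (X q) hXq
        have hinner : ∀ s : ℝ, (∫ t in (0:ℝ)..1,
            eval (fun m => if m = p then a else if m = q then t else s) (f * (X q))) =
            (c 0 0/2 + c 1 0/3) + (c 0 1/2 + c 1 1/3) * s + 0*s^2 + 0*s^3 := by
          intro s
          rw [show (∫ t in (0:ℝ)..1,
              eval (fun m => if m = p then a else if m = q then t else s) (f * (X q))) =
            ∫ t in (0:ℝ)..1, (((0:ℝ)) + ((c 0 0 + c 0 1 * s)) * t + ((c 1 0 + c 1 1 * s)) * t^2 + 0*t^3) from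
            intervalIntegral.integral_congr fun t _ => by
              rw [map_mul, keyZ, evalZq]; ring, intp01]
          ring
        simp only [hinner] at e
        rw [intp01] at e
        linarith
      · have e := hF' (X l) hXl
        have hinner : ∀ s : ℝ, (∫ t in (0:ℝ)..1,
            eval (fun m => if m = p then a else if m = q then t else s) (f * (X l))) =
            (0:ℝ) + (c 0 0 + c 1 0/2) * s + (c 0 1 + c 1 1/2) * s^2 + 0*s^3 := by
          intro s
          rw [show (∫ t in (0:ℝ)..1,
              eval (fun m => if m = p then a else if m = q then t else s) (f * (X l))) =
            ∫ t in (0:ℝ)..1, (((c 0 0 * s + c 0 1 * s^2)) + ((c 1 0 * s + c 1 1 * s^2)) * t + ((0:ℝ)) * t^2 + 0*t^3) from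
            intervalIntegral.integral_congr fun t _ => by
              rw [map_mul, keyZ, evalZl]; ring, intp01]
          ring
        simp only [hinner] at e
        rw [intp01] at e
        linarith
      · have e := hF' (X q * X l) hXql
        have hinner : ∀ s : ℝ, (∫ t in (0:ℝ)..1,
            eval (fun m => if m = p then a else if m = q then t else s) (f * (X q * X l))) =
            (0:ℝ) + (c 0 0/2 + c 1 0/3) * s + (c 0 1/2 + c 1 1/3) * s^2 + 0*s^3 := by
          intro s
          rw [show (∫ t in (0:ℝ)..1,
              eval (fun m => if m = p then a else if m = q then t else s) (f * (X q * X l))) =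
            ∫ t in (0:ℝ)..1, (((0:ℝ)) + ((c 0 0 * s + c 0 1 * s^2)) * t + ((c 1 0 * s + c 1 1 * s^2)) * t^2 + 0*t^3) from
            intervalIntegral.integral_congr fun t _ => by
              rw [map_mul, map_mul, keyZ, evalZq, evalZl]; ring, intp01]
          ring
        simp only [hinner] at e
        rw [intp01] at e
        linarith
  have z00 : c 0 0 = 0 := by linarith
  have z01 : c 0 1 = 0 := by linarith
  have z10 : c 1 0 = 0 := by linarith
  have z11 : c 1 1 = 0 := by linarith
  rw [key x hx, z00, z01, z10, z11]
  ring

/-- Face determination of the normal trace: if `σ ∈ S₂` and all the edge and face degrees of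
freedom associated with the face `f = {x_p = a}` of the unit cube vanish, then the normal
trace `σ n = (σ_{p1}, σ_{p2}, σ_{p3})` vanishes identically on `f`. -/
theorem face_determination (σ : Mat3) (hσ : isS2 σ) (p : Fin 3) (a : ℝ)
    (ha : a ∈ ({0, 1} : Set ℝ))
    (h1 : ∀ q l : Fin 3, q ≠ p → l ≠ p → l ≠ q → ∀ b ∈ ({0, 1} : Set ℝ),
      ∀ v ∈ Submodule.span ℝ ({1, X l} : Set Poly3), edgeInt p q a b (σ p q * v) = 0)
    (h2 : ∀ q l : Fin 3, q ≠ p → l ≠ p → q ≠ l →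
      ∀ v ∈ Submodule.span ℝ ({1, X q, X l, X q * X l} : Set Poly3),
        faceInt p a (σ p p * v) = 0)
    (h3 : ∀ q l : Fin 3, q ≠ p → l ≠ p → l ≠ q →
      ∀ v ∈ Submodule.span ℝ ({1, X l} : Set Poly3), faceInt p a (σ p q * v) = 0) :
    ∀ q : Fin 3, ∀ x : Fin 3 → ℝ, (∀ m, x m ∈ Set.Icc (0:ℝ) 1) → x p = a →
      MvPolynomial.eval x (σ p q) = 0 := by
  intro q x hx hxp
  obtain ⟨hsym, h00, h11, h22, h01, h02, h12⟩ := hσ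
  by_cases hqp : q = p
  · subst hqp
    fin_cases q
    · have hclean : ∀ v ∈ Submodule.span ℝ
          ({1, X (1:Fin 3), X (2:Fin 3), X (1:Fin 3) * X (2:Fin 3)} : Set Poly3),
          (∫ s in (0:ℝ)..1, ∫ t in (0:ℝ)..1,
            eval (fun m => if m = (0:Fin 3) then a else if m = (1:Fin 3) then s else t)
              (σ 0 0 * v)) = 0 := by
        intro v hv
        have h := h2 1 2 (by decide) (by decide) (by decide) v hv
        have hpt : ∀ s t : ℝ, (![a, s, t] : Fin 3 → ℝ)
            = fun m => if m = (0:Fin 3) then a else if m = (1:Fin 3) then s else t := by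
          intro s t; funext m; fin_cases m <;> simp
        simp only [faceInt, Fin.reduceEq, reduceIte] at h
        simp only [hpt] at h
        exact h
      refine diagKey (σ 0 0) 0 1 2 (by decide) (by decide) (by decide) a false
        (by simpa using h00 0) (by simpa using h00 1) (by simpa using h00 2)
        (fun v hv => by
          simp only [Bool.false_eq_true, Bool.true_eq_false, eq_self_iff_true, if_false, if_true]
          exact hclean v hv) x hxp
    · have hclean : ∀ v ∈ Submodule.span ℝ
          ({1, X (0:Fin 3), X (2:Fin 3), X (0:Fin 3) * X (2:Fin 3)} : Set Poly3),
          (∫ s in (0:ℝ)..1, ∫ t in (0:ℝ)..1,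
            eval (fun m => if m = (1:Fin 3) then a else if m = (0:Fin 3) then s else t)
              (σ 1 1 * v)) = 0 := by
        intro v hv
        have h := h2 0 2 (by decide) (by decide) (by decide) v hv
        have hpt : ∀ s t : ℝ, (![s, a, t] : Fin 3 → ℝ)
            = fun m => if m = (1:Fin 3) then a else if m = (0:Fin 3) then s else t := by
          intro s t; funext m; fin_cases m <;> simp
        simp only [faceInt, Fin.reduceEq, reduceIte] at h
        simp only [hpt] at h
        exact h
      refine diagKey (σ 1 1) 1 0 2 (by decide) (by decide) (by decide) a false
        (by simpa using h11 1) (by simpa using h11 0) (by simpa using h11 2)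
        (fun v hv => by
          simp only [Bool.false_eq_true, Bool.true_eq_false, eq_self_iff_true, if_false, if_true]
          exact hclean v hv) x hxp
    · have hclean : ∀ v ∈ Submodule.span ℝ
          ({1, X (0:Fin 3), X (1:Fin 3), X (0:Fin 3) * X (1:Fin 3)} : Set Poly3),
          (∫ s in (0:ℝ)..1, ∫ t in (0:ℝ)..1,
            eval (fun m => if m = (2:Fin 3) then a else if m = (0:Fin 3) then s else t)
              (σ 2 2 * v)) = 0 := by
        intro v hv
        have h := h2 0 1 (by decide) (by decide) (by decide) v hv
        have hpt : ∀ s t : ℝ, (![s, t, a] : Fin 3 → ℝ)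
            = fun m => if m = (2:Fin 3) then a else if m = (0:Fin 3) then s else t := by
          intro s t; funext m; fin_cases m <;> simp
        simp only [faceInt, Fin.reduceEq, reduceIte] at h
        simp only [hpt] at h
        exact h
      refine diagKey (σ 2 2) 2 0 1 (by decide) (by decide) (by decide) a false
        (by simpa using h22 2) (by simpa using h22 0) (by simpa using h22 1)
        (fun v hv => by
          simp only [Bool.false_eq_true, Bool.true_eq_false, eq_self_iff_true, if_false, if_true]
          exact hclean v hv) x hxp
  · fin_cases p <;> fin_cases q
    · exact absurd rfl hqp
    · have hm := h01
      have hclean : ∀ v ∈ Submodule.span ℝ ({1, X (2:Fin 3)} : Set Poly3),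
          (∫ s in (0:ℝ)..1, ∫ t in (0:ℝ)..1,
            eval (fun m => if m = (0:Fin 3) then a else if m = (1:Fin 3) then s else t)
              (σ 0 1 * v)) = 0 := by
        intro v hv
        have h := h3 1 2 (by decide) (by decide) (by decide) v hv
        have hpt : ∀ s t : ℝ, (![a, s, t] : Fin 3 → ℝ)
            = fun m => if m = (0:Fin 3) then a else if m = (1:Fin 3) then s else t := by
          intro s t; funext m; fin_cases m <;> simp
        simp only [faceInt, Fin.reduceEq, reduceIte] at h
        simp only [hpt] at h
        exact h
      refine offdiagKey (σ 0 1) 0 1 2 (by decide) (by decide) (by decide) a false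
        (by simpa using hm 0) (by simpa using hm 1) (by simpa using hm 2)
        (fun b hb v hv => by
          exact h1 1 2 (by decide) (by decide) (by decide) b hb v hv)
        (fun v hv => by
          simp only [Bool.false_eq_true, Bool.true_eq_false, eq_self_iff_true, if_false, if_true]
          exact hclean v hv) x hxp
    · have hm := h02
      have hclean : ∀ v ∈ Submodule.span ℝ ({1, X (1:Fin 3)} : Set Poly3),
          (∫ s in (0:ℝ)..1, ∫ t in (0:ℝ)..1,
            eval (fun m => if m = (0:Fin 3) then a else if m = (2:Fin 3) then t else s)
              (σ 0 2 * v)) = 0 := by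
        intro v hv
        have h := h3 2 1 (by decide) (by decide) (by decide) v hv
        have hpt : ∀ s t : ℝ, (![a, s, t] : Fin 3 → ℝ)
            = fun m => if m = (0:Fin 3) then a else if m = (2:Fin 3) then t else s := by
          intro s t; funext m; fin_cases m <;> simp
        simp only [faceInt, Fin.reduceEq, reduceIte] at h
        simp only [hpt] at h
        exact h
      refine offdiagKey (σ 0 2) 0 2 1 (by decide) (by decide) (by decide) a true
        (by simpa using hm 0) (by simpa using hm 2) (by simpa using hm 1)
        (fun b hb v hv => by
          exact h1 2 1 (by decide) (by decide) (by decide) b hb v hv)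
        (fun v hv => by
          simp only [Bool.false_eq_true, Bool.true_eq_false, eq_self_iff_true, if_false, if_true]
          exact hclean v hv) x hxp
    · have hm : σ 1 0 ∈ Pdeg ![2,2,1] := by rw [hsym 1 0]; exact h01
      have hclean : ∀ v ∈ Submodule.span ℝ ({1, X (2:Fin 3)} : Set Poly3),
          (∫ s in (0:ℝ)..1, ∫ t in (0:ℝ)..1,
            eval (fun m => if m = (1:Fin 3) then a else if m = (0:Fin 3) then s else t)
              (σ 1 0 * v)) = 0 := by
        intro v hv
        have h := h3 0 2 (by decide) (by decide) (by decide) v hv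
        have hpt : ∀ s t : ℝ, (![s, a, t] : Fin 3 → ℝ)
            = fun m => if m = (1:Fin 3) then a else if m = (0:Fin 3) then s else t := by
          intro s t; funext m; fin_cases m <;> simp
        simp only [faceInt, Fin.reduceEq, reduceIte] at h
        simp only [hpt] at h
        exact h
      refine offdiagKey (σ 1 0) 1 0 2 (by decide) (by decide) (by decide) a false
        (by simpa using hm 1) (by simpa using hm 0) (by simpa using hm 2)
        (fun b hb v hv => by
          exact h1 0 2 (by decide) (by decide) (by decide) b hb v hv)
        (fun v hv => by
          simp only [Bool.false_eq_true, Bool.true_eq_false, eq_self_iff_true, if_false, if_true]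
          exact hclean v hv) x hxp
    · exact absurd rfl hqp
    · have hm := h12
      have hclean : ∀ v ∈ Submodule.span ℝ ({1, X (0:Fin 3)} : Set Poly3),
          (∫ s in (0:ℝ)..1, ∫ t in (0:ℝ)..1,
            eval (fun m => if m = (1:Fin 3) then a else if m = (2:Fin 3) then t else s)
              (σ 1 2 * v)) = 0 := by
        intro v hv
        have h := h3 2 0 (by decide) (by decide) (by decide) v hv
        have hpt : ∀ s t : ℝ, (![s, a, t] : Fin 3 → ℝ)
            = fun m => if m = (1:Fin 3) then a else if m = (2:Fin 3) then t else s := by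
          intro s t; funext m; fin_cases m <;> simp
        simp only [faceInt, Fin.reduceEq, reduceIte] at h
        simp only [hpt] at h
        exact h
      refine offdiagKey (σ 1 2) 1 2 0 (by decide) (by decide) (by decide) a true
        (by simpa using hm 1) (by simpa using hm 2) (by simpa using hm 0)
        (fun b hb v hv => by
          exact h1 2 0 (by decide) (by decide) (by decide) b hb v hv)
        (fun v hv => by
          simp only [Bool.false_eq_true, Bool.true_eq_false, eq_self_iff_true, if_false, if_true]
          exact hclean v hv) x hxp
    · have hm : σ 2 0 ∈ Pdeg ![2,1,2] := by rw [hsym 2 0]; exact h02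
      have hclean : ∀ v ∈ Submodule.span ℝ ({1, X (1:Fin 3)} : Set Poly3),
          (∫ s in (0:ℝ)..1, ∫ t in (0:ℝ)..1,
            eval (fun m => if m = (2:Fin 3) then a else if m = (0:Fin 3) then s else t)
              (σ 2 0 * v)) = 0 := by
        intro v hv
        have h := h3 0 1 (by decide) (by decide) (by decide) v hv
        have hpt : ∀ s t : ℝ, (![s, t, a] : Fin 3 → ℝ)
            = fun m => if m = (2:Fin 3) then a else if m = (0:Fin 3) then s else t := by
          intro s t; funext m; fin_cases m <;> simp
        simp only [faceInt, Fin.reduceEq, reduceIte] at h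
        simp only [hpt] at h
        exact h
      refine offdiagKey (σ 2 0) 2 0 1 (by decide) (by decide) (by decide) a false
        (by simpa using hm 2) (by simpa using hm 0) (by simpa using hm 1)
        (fun b hb v hv => by
          exact h1 0 1 (by decide) (by decide) (by decide) b hb v hv)
        (fun v hv => by
          simp only [Bool.false_eq_true, Bool.true_eq_false, eq_self_iff_true, if_false, if_true]
          exact hclean v hv) x hxp
    · have hm : σ 2 1 ∈ Pdeg ![1,2,2] := by rw [hsym 2 1]; exact h12
      have hclean : ∀ v ∈ Submodule.span ℝ ({1, X (0:Fin 3)} : Set Poly3),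
          (∫ s in (0:ℝ)..1, ∫ t in (0:ℝ)..1,
            eval (fun m => if m = (2:Fin 3) then a else if m = (1:Fin 3) then t else s)
              (σ 2 1 * v)) = 0 := by
        intro v hv
        have h := h3 1 0 (by decide) (by decide) (by decide) v hv
        have hpt : ∀ s t : ℝ, (![s, t, a] : Fin 3 → ℝ)
            = fun m => if m = (2:Fin 3) then a else if m = (1:Fin 3) then t else s := by
          intro s t; funext m; fin_cases m <;> simp
        simp only [faceInt, Fin.reduceEq, reduceIte] at h
        simp only [hpt] at h
        exact h
      refine offdiagKey (σ 2 1) 2 1 0 (by decide) (by decide) (by decide) a true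
        (by simpa using hm 2) (by simpa using hm 1) (by simpa using hm 0)
        (fun b hb v hv => by
          exact h1 1 0 (by decide) (by decide) (by decide) b hb v hv)
        (fun v hv => by
          simp only [Bool.false_eq_true, Bool.true_eq_false, eq_self_iff_true, if_false, if_true]
          exact hclean v hv) x hxp
    · exact absurd rfl hqp


end
end
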